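/- arXiv:nlin/0305058 — 4 statements merged into one kernel-verified Lean document; each statement's English description precedes it below -/
import Mathlib

section
/- Let 1 ≤ k ≤ n−1 and let A be an n×n matrix of rational functions, each bounded at infinity, which is reduced of order k−1. Then either A_{k,k+1} = A_{k,k+2} = … = A_{k,n} = 0 identically, or else there exists an n×n matrix B of rational functions, each bounded at infinity, such that B is of the same kind as A, B is reduced of order k−1, B_{k,k+1}(∞) ≠ 0, and the constant matrices A(∞) and B(∞) have the same characteristic polynomial, i.e., the same eigenvalues counting algebraic multiplicities. -/
open Filter

/-- Evaluation of a rational function at a point of `ℂ`. -/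
noncomputable def evalRat (f : RatFunc ℂ) (z : ℂ) : ℂ := f.eval (RingHom.id ℂ) z

/-- A rational function is bounded at infinity iff the degree of its numerator
does not exceed the degree of its denominator. -/
def BddAtInf (f : RatFunc ℂ) : Prop := f.num.degree ≤ f.denom.degree

/-- The derivative of a rational function, as a rational function. -/
noncomputable def ratDeriv (f : RatFunc ℂ) : RatFunc ℂ :=
  (algebraMap (Polynomial ℂ) (RatFunc ℂ) (Polynomial.derivative f.num) *
      algebraMap (Polynomial ℂ) (RatFunc ℂ) f.denom -
    algebraMap (Polynomial ℂ) (RatFunc ℂ) f.num *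
      algebraMap (Polynomial ℂ) (RatFunc ℂ) (Polynomial.derivative f.denom)) /
  algebraMap (Polynomial ℂ) (RatFunc ℂ) f.denom ^ 2

/-- Two `n × n` matrices of rational functions are of the same kind if there is
an invertible matrix `T` over the field of rational functions with
`B = T⁻¹ (A T − T')`. -/
def SameKind {n : ℕ} (A B : Matrix (Fin n) (Fin n) (RatFunc ℂ)) : Prop :=
  ∃ T : Matrix (Fin n) (Fin n) (RatFunc ℂ), IsUnit T.det ∧
    B = T⁻¹ * (A * T - T.map ratDeriv)

/-- A matrix of rational functions is reduced of order `k` if its rows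
`1, …, k` (here: indices `0, …, k-1`) are the corresponding rows of the
companion-type matrix, i.e. `B_{j,ℓ} = δ_{j+1,ℓ}`. -/
def ReducedOfOrder {n : ℕ} (k : ℕ) (A : Matrix (Fin n) (Fin n) (RatFunc ℂ)) : Prop :=
  ∀ j ℓ : Fin n, (j : ℕ) < k → A j ℓ = if (j : ℕ) + 1 = (ℓ : ℕ) then 1 else 0

/-!
Let `ℓ ≥ k+1` be a column where `A_{k,ℓ}` has the smallest order of vanishing `d` at `∞`.
Swapping the indices `k+1` and `ℓ` and conjugating by `diag(1, …, 1, z^d, …, z^d)` (with `z^d` on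
the indices `> k`) multiplies the tail of row `k` by `z^d`, so that `B_{k,k+1}(∞) ≠ 0`, while
every other entry stays bounded; the rows above `k` have zero tails because `A` is reduced.
The logarithmic derivative `T' T⁻¹` is `O(1/z)`, so `B` is conjugate over `ℂ(z)` to a matrix whose
value at `∞` is a permutation conjugate of `A(∞)`. Since evaluation at `∞` is a ring homomorphism
on the valuation ring of the place at infinity, it commutes with taking characteristic polynomials.
-/

open Polynomial Bornology Topology Matrix

noncomputable section

local instance : DecidableEq (RatFunc ℂ) := Classical.decEq _

local notation "𝒪∞" => Valuation.integer (RatFunc.inftyValuation ℂ)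

theorem inftyValuation_eq_exp {f : RatFunc ℂ} (hf : f ≠ 0) :
    RatFunc.inftyValuation ℂ f = WithZero.exp ((f.num.natDegree : ℤ) - f.denom.natDegree) := by
  rw [RatFunc.inftyValuation_apply, RatFunc.inftyValuation_of_nonzero _ hf, RatFunc.intDegree]

theorem bddAtInf_iff_mem_integer (f : RatFunc ℂ) : BddAtInf f ↔ f ∈ 𝒪∞ := by
  rw [Valuation.mem_integer_iff, BddAtInf]
  rcases eq_or_ne f 0 with rfl | hf
  · simp
  rw [inftyValuation_eq_exp hf, ← WithZero.exp_zero, WithZero.exp_le_exp, sub_nonpos, Nat.cast_le,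
    degree_eq_natDegree (RatFunc.num_ne_zero hf), degree_eq_natDegree f.denom_ne_zero, Nat.cast_le]

/-- The limit at `∞` of a rational function bounded there; meaningless otherwise. -/
def valAtInf (f : RatFunc ℂ) : ℂ := f.num.coeff f.denom.natDegree / f.denom.leadingCoeff

theorem tendsto_eval_div_eval {p q : ℂ[X]} (hq : q ≠ 0) (hpq : p.degree ≤ q.degree) :
    Tendsto (fun z => p.eval z / q.eval z) (cobounded ℂ)
      (𝓝 (p.coeff q.natDegree / q.leadingCoeff)) := by
  rcases hpq.lt_or_eq with hlt | heq
  · rw [coeff_eq_zero_of_degree_lt (degree_eq_natDegree hq ▸ hlt), zero_div]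
    exact (isLittleO_cobounded_of_degree_lt hlt).tendsto_div_nhds_zero
  · have hdeg : p.natDegree = q.natDegree := natDegree_eq_natDegree heq
    rw [← hdeg, coeff_natDegree]
    refine (isEquivalent_cobounded_leading_monomial.div
      isEquivalent_cobounded_leading_monomial).symm.tendsto_nhds (tendsto_const_nhds.congr' ?_)
    filter_upwards [eventually_ne_cobounded 0] with z hz
    rw [Pi.div_apply, hdeg, mul_div_mul_right _ _ (pow_ne_zero _ hz)]

theorem tendsto_evalRat_valAtInf {f : RatFunc ℂ} (hf : BddAtInf f) :
    Tendsto (evalRat f) (cobounded ℂ) (𝓝 (valAtInf f)) :=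
  tendsto_eval_div_eval f.denom_ne_zero hf

theorem valAtInf_eq_of_tendsto {f : RatFunc ℂ} {c : ℂ} (hf : BddAtInf f)
    (h : Tendsto (evalRat f) (cobounded ℂ) (𝓝 c)) : valAtInf f = c :=
  tendsto_nhds_unique (tendsto_evalRat_valAtInf hf) h

theorem eventually_eval_denom_ne_zero (f : RatFunc ℂ) :
    ∀ᶠ z in cobounded ℂ, eval₂ (RingHom.id ℂ) z f.denom ≠ 0 :=
  le_cofinite ℂ (eventually_cofinite_not_isRoot f.denom_ne_zero)

theorem evalRat_add_eventuallyEq (f g : RatFunc ℂ) :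
    evalRat (f + g) =ᶠ[cobounded ℂ] evalRat f + evalRat g := by
  filter_upwards [eventually_eval_denom_ne_zero f, eventually_eval_denom_ne_zero g] with z hf hg
  exact RatFunc.eval_add _ _ hf hg

theorem evalRat_mul_eventuallyEq (f g : RatFunc ℂ) :
    evalRat (f * g) =ᶠ[cobounded ℂ] evalRat f * evalRat g := by
  filter_upwards [eventually_eval_denom_ne_zero f, eventually_eval_denom_ne_zero g] with z hf hg
  exact RatFunc.eval_mul _ _ hf hg

def valAtInfHom : 𝒪∞ →+* ℂ where
  toFun f := valAtInf f
  map_one' := by simp [valAtInf]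
  map_zero' := by simp [valAtInf]
  map_add' f g := by
    have hf := (bddAtInf_iff_mem_integer _).2 f.2
    have hg := (bddAtInf_iff_mem_integer _).2 g.2
    exact valAtInf_eq_of_tendsto ((bddAtInf_iff_mem_integer _).2 (f + g).2)
      (((tendsto_evalRat_valAtInf hf).add (tendsto_evalRat_valAtInf hg)).congr'
        (evalRat_add_eventuallyEq _ _).symm)
  map_mul' f g := by
    have hf := (bddAtInf_iff_mem_integer _).2 f.2
    have hg := (bddAtInf_iff_mem_integer _).2 g.2
    exact valAtInf_eq_of_tendsto ((bddAtInf_iff_mem_integer _).2 (f * g).2)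
      (((tendsto_evalRat_valAtInf hf).mul (tendsto_evalRat_valAtInf hg)).congr'
        (evalRat_mul_eventuallyEq _ _).symm)

theorem valAtInf_eq_zero_of_lt_one {f : RatFunc ℂ} (h : RatFunc.inftyValuation ℂ f < 1) :
    valAtInf f = 0 := by
  rcases eq_or_ne f 0 with rfl | hf
  · simp [valAtInf]
  rw [inftyValuation_eq_exp hf, ← WithZero.exp_zero, WithZero.exp_lt_exp, sub_neg, Nat.cast_lt] at h
  rw [valAtInf, coeff_eq_zero_of_natDegree_lt h, zero_div]

theorem valAtInf_sub_of_lt_one {f g : RatFunc ℂ} (hf : f ∈ 𝒪∞)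
    (hg : RatFunc.inftyValuation ℂ g < 1) : valAtInf (f - g) = valAtInf f := by
  have hg' : g ∈ 𝒪∞ := hg.le
  change valAtInfHom (⟨f, hf⟩ - ⟨g, hg'⟩) = valAtInfHom ⟨f, hf⟩
  rw [map_sub, sub_eq_self]
  exact valAtInf_eq_zero_of_lt_one hg

theorem valAtInf_ne_zero_of_eq_one {f : RatFunc ℂ} (h : RatFunc.inftyValuation ℂ f = 1) :
    valAtInf f ≠ 0 := by
  have hf : f ≠ 0 := by rintro rfl; simp at h
  rw [inftyValuation_eq_exp hf, ← WithZero.exp_zero, WithZero.exp_inj, sub_eq_zero,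
    Nat.cast_inj] at h
  rw [valAtInf, ← h, coeff_natDegree]
  exact div_ne_zero (leadingCoeff_ne_zero.2 (RatFunc.num_ne_zero hf))
    (leadingCoeff_ne_zero.2 f.denom_ne_zero)

theorem inftyValuation_X_inv_lt_one : RatFunc.inftyValuation ℂ RatFunc.X⁻¹ < 1 := by
  rw [map_inv₀, RatFunc.inftyValuation.X, ← WithZero.exp_neg, ← WithZero.exp_zero,
    WithZero.exp_lt_exp]
  norm_num

theorem exists_inftyValuation_mul_X_pow_eq_one {f : RatFunc ℂ} (hf : f ≠ 0) (hbdd : f ∈ 𝒪∞) :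
    ∃ d : ℕ, RatFunc.inftyValuation ℂ (f * RatFunc.X ^ d) = 1 := by
  rw [Valuation.mem_integer_iff, inftyValuation_eq_exp hf, ← WithZero.exp_zero,
    WithZero.exp_le_exp] at hbdd
  refine ⟨f.denom.natDegree - f.num.natDegree, ?_⟩
  rw [map_mul, map_pow, inftyValuation_eq_exp hf, RatFunc.inftyValuation.X, ← WithZero.exp_nsmul,
    ← WithZero.exp_add, ← WithZero.exp_zero]
  congr 1
  simp only [nsmul_eq_mul, mul_one]
  omega

theorem exists_mul_X_pow_mem_integer_valAtInf_ne_zero {ι : Type*} (s : Finset ι)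
    (g : ι → RatFunc ℂ) (hg : ∀ i ∈ s, g i ∈ 𝒪∞) (hne : ∃ i ∈ s, g i ≠ 0) :
    ∃ i₀ ∈ s, ∃ d : ℕ, (∀ i ∈ s, g i * RatFunc.X ^ d ∈ 𝒪∞) ∧
      valAtInf (g i₀ * RatFunc.X ^ d) ≠ 0 := by
  obtain ⟨i₁, hi₁, hi₁ne⟩ := hne
  obtain ⟨i₀, hi₀, hmax⟩ := s.exists_max_image (fun i => RatFunc.inftyValuation ℂ (g i)) ⟨i₁, hi₁⟩
  have hi₀ne : g i₀ ≠ 0 := fun h => hi₁ne (by simpa [h] using hmax i₁ hi₁)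
  obtain ⟨d, hd⟩ := exists_inftyValuation_mul_X_pow_eq_one hi₀ne (hg i₀ hi₀)
  refine ⟨i₀, hi₀, d, fun i hi => ?_, valAtInf_ne_zero_of_eq_one hd⟩
  rw [Valuation.mem_integer_iff, ← hd, map_mul, map_mul]
  exact mul_le_mul_left (hmax i hi) _

theorem charpoly_map_valAtInf_eq {n : Type*} [Fintype n] [DecidableEq n]
    {M N : Matrix n n (RatFunc ℂ)} (hM : ∀ i j, M i j ∈ 𝒪∞) (hN : ∀ i j, N i j ∈ 𝒪∞)
    (h : M.charpoly = N.charpoly) : (M.map valAtInf).charpoly = (N.map valAtInf).charpoly := by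
  set M' : Matrix n n 𝒪∞ := Matrix.of fun i j => ⟨M i j, hM i j⟩
  set N' : Matrix n n 𝒪∞ := Matrix.of fun i j => ⟨N i j, hN i j⟩
  have hlift : M'.charpoly = N'.charpoly := by
    apply Polynomial.map_injective _ (Subring.subtype_injective _)
    rw [← charpoly_map, ← charpoly_map]
    exact h
  have hM' : M.map valAtInf = M'.map valAtInfHom := rfl
  have hN' : N.map valAtInf = N'.map valAtInfHom := rfl
  rw [hM', hN', charpoly_map, charpoly_map, hlift]

theorem ratDeriv_algebraMap (p : ℂ[X]) :
    ratDeriv (algebraMap ℂ[X] (RatFunc ℂ) p) = algebraMap ℂ[X] (RatFunc ℂ) (derivative p) := by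
  simp [ratDeriv]

theorem ratDeriv_zero : ratDeriv 0 = 0 := by
  simpa using ratDeriv_algebraMap 0

theorem ratDeriv_one : ratDeriv 1 = 0 := by
  simpa using ratDeriv_algebraMap 1

theorem ratDeriv_X_pow_div (m : ℕ) :
    ratDeriv (RatFunc.X ^ m) / RatFunc.X ^ m = (m : RatFunc ℂ) * RatFunc.X⁻¹ := by
  rw [← RatFunc.algebraMap_X, ← map_pow, ratDeriv_algebraMap, derivative_X_pow]
  rcases m with _ | m
  · simp
  · simp only [map_mul, map_pow, map_natCast, RatFunc.algebraMap_X]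
    field_simp [RatFunc.X_ne_zero]
    rw [Nat.add_sub_cancel, pow_succ]

variable {n : ℕ}

/-- `T⁻¹ (A T - T')` for the monomial matrix `T = P_σ · diag(t)`. -/
def gaugeTransform (A : Matrix (Fin n) (Fin n) (RatFunc ℂ)) (σ : Equiv.Perm (Fin n))
    (t : Fin n → RatFunc ℂ) : Matrix (Fin n) (Fin n) (RatFunc ℂ) :=
  diagonal (fun i => (t i)⁻¹) * (A.submatrix σ σ - diagonal fun i => ratDeriv (t i) / t i) *
    diagonal t

theorem gaugeTransform_apply (A : Matrix (Fin n) (Fin n) (RatFunc ℂ)) (σ : Equiv.Perm (Fin n))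
    (t : Fin n → RatFunc ℂ) (i j : Fin n) :
    gaugeTransform A σ t i j =
      (t i)⁻¹ * (A (σ i) (σ j) - if i = j then ratDeriv (t i) / t i else 0) * t j := by
  simp [gaugeTransform, diagonal_apply]

theorem sameKind_gaugeTransform (A : Matrix (Fin n) (Fin n) (RatFunc ℂ)) (σ : Equiv.Perm (Fin n))
    {t : Fin n → RatFunc ℂ} (ht : ∀ i, t i ≠ 0) : SameKind A (gaugeTransform A σ t) := by
  set T := (diagonal t).submatrix σ.symm id
  set U := (diagonal fun i => (t i)⁻¹).submatrix id σ.symm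
  have hdiag : diagonal (fun i => (t i)⁻¹) * diagonal t = 1 := by
    rw [diagonal_mul_diagonal, ← diagonal_one]
    exact congrArg diagonal (funext fun i => inv_mul_cancel₀ (ht i))
  have hUT : U * T = 1 := by
    rw [submatrix_mul_equiv, hdiag, submatrix_id_id]
  refine ⟨T, isUnit_det_of_left_inverse hUT, ?_⟩
  have hT' : T.map ratDeriv = (diagonal fun i => ratDeriv (t i)).submatrix σ.symm id := by
    rw [← submatrix_map, diagonal_map ratDeriv_zero]
  have hA : A = (A.submatrix σ σ).submatrix σ.symm σ.symm := by simp
  conv_rhs => rw [inv_eq_left_inv hUT, hT', mul_sub, ← mul_assoc, hA, submatrix_mul_equiv,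
    submatrix_mul_equiv, submatrix_mul_equiv, submatrix_id_id, submatrix_id_id]
  rw [gaugeTransform, mul_sub, sub_mul, diagonal_mul_diagonal, diagonal_mul_diagonal,
    diagonal_mul_diagonal]
  congr 2
  funext i
  field_simp [ht i]

theorem charpoly_gaugeTransform (A : Matrix (Fin n) (Fin n) (RatFunc ℂ)) (σ : Equiv.Perm (Fin n))
    {t : Fin n → RatFunc ℂ} (ht : ∀ i, t i ≠ 0) :
    (gaugeTransform A σ t).charpoly =
      (A.submatrix σ σ - diagonal fun i => ratDeriv (t i) / t i).charpoly := by
  have hdiag : diagonal t * diagonal (fun i => (t i)⁻¹) = 1 := by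
    rw [diagonal_mul_diagonal, ← diagonal_one]
    exact congrArg diagonal (funext fun i => mul_inv_cancel₀ (ht i))
  rw [gaugeTransform, charpoly_mul_comm, ← mul_assoc, hdiag, one_mul]

theorem charpoly_map_valAtInf_gaugeTransform {A : Matrix (Fin n) (Fin n) (RatFunc ℂ)}
    {σ : Equiv.Perm (Fin n)} {t : Fin n → RatFunc ℂ} (ht : ∀ i, t i ≠ 0)
    (hA : ∀ i j, A i j ∈ 𝒪∞) (hB : ∀ i j, gaugeTransform A σ t i j ∈ 𝒪∞)
    (hlog : ∀ i, RatFunc.inftyValuation ℂ (ratDeriv (t i) / t i) < 1) :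
    ((gaugeTransform A σ t).map valAtInf).charpoly = (A.map valAtInf).charpoly := by
  have hC : ∀ i j, (A.submatrix σ σ - diagonal fun i => ratDeriv (t i) / t i) i j ∈ 𝒪∞ :=
    fun i j => sub_mem (hA _ _) <| by
      rw [diagonal_apply]; split_ifs; exacts [(hlog i).le, zero_mem _]
  rw [charpoly_map_valAtInf_eq hB hC (charpoly_gaugeTransform A σ ht)]
  conv_rhs => rw [← charpoly_reindex σ.symm]
  congr 1
  ext i j
  simp only [reindex_apply, Equiv.symm_symm, submatrix_apply, map_apply, Matrix.sub_apply,
    diagonal_apply]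
  split_ifs
  · exact valAtInf_sub_of_lt_one (hA _ _) (hlog i)
  · rw [sub_zero]

def shiftGauge (k d : ℕ) (i : Fin n) : RatFunc ℂ := RatFunc.X ^ (if k ≤ (i : ℕ) then d else 0)

theorem shiftGauge_ne_zero (k d : ℕ) (i : Fin n) : shiftGauge k d i ≠ 0 :=
  pow_ne_zero _ RatFunc.X_ne_zero

theorem inftyValuation_ratDeriv_shiftGauge_div_lt_one (k d : ℕ) (i : Fin n) :
    RatFunc.inftyValuation ℂ (ratDeriv (shiftGauge k d i) / shiftGauge k d i) < 1 := by
  rw [shiftGauge, ratDeriv_X_pow_div, map_mul]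
  exact (mul_le_of_le_one_left zero_le (natCast_mem 𝒪∞ _)).trans_lt inftyValuation_X_inv_lt_one

theorem inv_X_pow_mul_mul_X_pow_mem_integer {f : RatFunc ℂ} (hf : f ∈ 𝒪∞) {a b : ℕ}
    (hba : b ≤ a) :
    (RatFunc.X ^ a)⁻¹ * f * RatFunc.X ^ b ∈ 𝒪∞ := by
  have hX : RatFunc.X⁻¹ ∈ 𝒪∞ := inftyValuation_X_inv_lt_one.le
  obtain ⟨c, rfl⟩ := Nat.exists_eq_add_of_le hba
  rw [pow_add, mul_inv, mul_comm, ← mul_assoc, ← mul_assoc,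
    mul_inv_cancel₀ (pow_ne_zero _ RatFunc.X_ne_zero), one_mul, ← inv_pow]
  exact mul_mem (pow_mem hX _) hf

theorem le_val_perm_apply_iff {σ : Equiv.Perm (Fin n)} {k : ℕ}
    (hσ : ∀ i : Fin n, (i : ℕ) < k → σ i = i) (i : Fin n) : k ≤ (σ i : ℕ) ↔ k ≤ (i : ℕ) := by
  constructor
  · intro h
    by_contra hi
    rw [hσ i (not_le.1 hi)] at h
    exact hi h
  · intro h
    by_contra hi
    have := hσ (σ i) (not_le.1 hi)
    rw [σ.injective this] at hi
    exact hi h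

variable {A : Matrix (Fin n) (Fin n) (RatFunc ℂ)} {σ : Equiv.Perm (Fin n)} {k d : ℕ}

theorem gaugeTransform_shiftGauge_apply_of_lt_of_le (hσ : ∀ i : Fin n, (i : ℕ) < k → σ i = i)
    {i j : Fin n} (hi : (i : ℕ) < k) (hj : k ≤ (j : ℕ)) :
    gaugeTransform A σ (shiftGauge k d) i j = A i (σ j) * RatFunc.X ^ d := by
  have hij : i ≠ j := by rintro rfl; omega
  simp [gaugeTransform_apply, shiftGauge, hij, hj, hσ i hi, not_le.2 hi]

theorem reducedOfOrder_gaugeTransform_shiftGauge (hred : ReducedOfOrder (k - 1) A)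
    (hσ : ∀ i : Fin n, (i : ℕ) < k → σ i = i) :
    ReducedOfOrder (k - 1) (gaugeTransform A σ (shiftGauge k d)) := by
  intro i j hi
  by_cases hj : k ≤ (j : ℕ)
  · rw [gaugeTransform_shiftGauge_apply_of_lt_of_le hσ (by omega) hj, hred i _ hi,
      if_neg (by have := (le_val_perm_apply_iff hσ j).2 hj; omega), if_neg (by omega), zero_mul]
  · rw [gaugeTransform_apply, ← hred i j hi]
    simp [shiftGauge, hσ i (by omega), hσ j (by omega), not_le.2 (show (i : ℕ) < k by omega),
      not_le.2 (show (j : ℕ) < k by omega), ratDeriv_one]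

theorem gaugeTransform_shiftGauge_mem_integer (hA : ∀ i j, A i j ∈ 𝒪∞)
    (hred : ReducedOfOrder (k - 1) A) (hσ : ∀ i : Fin n, (i : ℕ) < k → σ i = i) {κ : Fin n}
    (hκ : (κ : ℕ) + 1 = k) (hrow : ∀ ℓ : Fin n, k ≤ (ℓ : ℕ) → A κ ℓ * RatFunc.X ^ d ∈ 𝒪∞)
    (i j : Fin n) : gaugeTransform A σ (shiftGauge k d) i j ∈ 𝒪∞ := by
  by_cases hij : (i : ℕ) < k ∧ k ≤ (j : ℕ)
  · rw [gaugeTransform_shiftGauge_apply_of_lt_of_le hσ hij.1 hij.2]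
    have hσj := (le_val_perm_apply_iff hσ j).2 hij.2
    rcases (show (i : ℕ) + 1 = k ∨ (i : ℕ) < k - 1 by omega) with hi | hi
    · rw [show i = κ from Fin.ext (by omega)]
      exact hrow _ hσj
    · rw [hred i _ hi, if_neg (by omega), zero_mul]
      exact zero_mem _
  · rw [gaugeTransform_apply]
    refine inv_X_pow_mul_mul_X_pow_mem_integer (sub_mem (hA _ _) ?_) (by split_ifs <;> omega)
    split_ifs
    exacts [(inftyValuation_ratDeriv_shiftGauge_div_lt_one k d i).le, zero_mem _]

/-- Lemma 2.3: if `A` is reduced of order `k-1` (rows and columns numbered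
`1, …, n`) and bounded at infinity, then either the entries
`A_{k,k+1}, …, A_{k,n}` all vanish, or there is a matrix `B`, of the same kind
as `A`, bounded at infinity, reduced of order `k-1`, with `B_{k,k+1}(∞) ≠ 0`,
and such that `A(∞)` and `B(∞)` have the same characteristic polynomial. -/
theorem lemma_same_kind_nonvanishing (n k : ℕ) (hk1 : 1 ≤ k) (hkn : k ≤ n - 1)
    (A : Matrix (Fin n) (Fin n) (RatFunc ℂ))
    (hbdd : ∀ i j, BddAtInf (A i j))
    (Ainf : Matrix (Fin n) (Fin n) ℂ)
    (hAinf : ∀ i j, Tendsto (evalRat (A i j)) (Bornology.cobounded ℂ) (nhds (Ainf i j)))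
    (hred : ReducedOfOrder (k - 1) A) :
    (∀ ℓ : Fin n, k ≤ (ℓ : ℕ) → A ⟨k - 1, by omega⟩ ℓ = 0) ∨
    ∃ (B : Matrix (Fin n) (Fin n) (RatFunc ℂ)) (Binf : Matrix (Fin n) (Fin n) ℂ),
      (∀ i j, BddAtInf (B i j)) ∧
      (∀ i j, Tendsto (evalRat (B i j)) (Bornology.cobounded ℂ) (nhds (Binf i j))) ∧
      SameKind A B ∧
      ReducedOfOrder (k - 1) B ∧
      Binf ⟨k - 1, by omega⟩ ⟨k, by omega⟩ ≠ 0 ∧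
      Ainf.charpoly = Binf.charpoly := by
  by_cases hzero : ∀ ℓ : Fin n, k ≤ (ℓ : ℕ) → A ⟨k - 1, by omega⟩ ℓ = 0
  · exact Or.inl hzero
  push Not at hzero
  have hA : ∀ i j, A i j ∈ 𝒪∞ := fun i j => (bddAtInf_iff_mem_integer _).1 (hbdd i j)
  obtain ⟨ℓ, hℓ, d, hrow, hne⟩ := exists_mul_X_pow_mem_integer_valAtInf_ne_zero
    {ℓ : Fin n | k ≤ (ℓ : ℕ)} (A ⟨k - 1, by omega⟩) (fun ℓ _ => hA _ ℓ) (by simpa using hzero)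
  simp only [Finset.mem_filter, Finset.mem_univ, true_and] at hℓ hrow
  set σ := Equiv.swap (⟨k, by omega⟩ : Fin n) ℓ
  have hσ : ∀ i : Fin n, (i : ℕ) < k → σ i = i := fun i hi =>
    Equiv.swap_apply_of_ne_of_ne (Fin.ne_of_val_ne (show (i : ℕ) ≠ k by omega))
      (Fin.ne_of_val_ne (by omega))
  have hB := gaugeTransform_shiftGauge_mem_integer hA hred hσ (show k - 1 + 1 = k by omega) hrow
  have hAinf' : Ainf = A.map valAtInf :=
    Matrix.ext fun i j => (valAtInf_eq_of_tendsto (hbdd i j) (hAinf i j)).symm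
  refine Or.inr ⟨gaugeTransform A σ (shiftGauge k d),
    (gaugeTransform A σ (shiftGauge k d)).map valAtInf,
    fun i j => (bddAtInf_iff_mem_integer _).2 (hB i j),
    fun i j => tendsto_evalRat_valAtInf ((bddAtInf_iff_mem_integer _).2 (hB i j)),
    sameKind_gaugeTransform A σ (shiftGauge_ne_zero k d),
    reducedOfOrder_gaugeTransform_shiftGauge hred hσ, ?_, ?_⟩
  · rw [map_apply, gaugeTransform_shiftGauge_apply_of_lt_of_le hσ (show k - 1 < k by omega) le_rfl,
      Equiv.swap_apply_left]
    exact hne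
  · rw [hAinf', charpoly_map_valAtInf_gaugeTransform (shiftGauge_ne_zero k d) hA hB
      (inftyValuation_ratDeriv_shiftGauge_div_lt_one k d)]

end
end

section
/- Scalar case of Halphen's theorem for systems (n = 1): Let Q be a scalar rational function bounded at infinity with value Q(∞) = λ ∈ ℂ, and suppose the equation y'(z) = Q(z) y(z) has a solution that is meromorphic on ℂ and not identically zero. Then Q has only simple poles, each with integer residue; that is, Q(z) = λ + Σ_{ℓ=1}^N m_ℓ/(z − a_ℓ) for some N ∈ ℕ₀, pairwise distinct a_1, …, a_N ∈ ℂ and integers m_1, …, m_N, and every meromorphic solution is a constant multiple of y(z) = (∏_{ℓ=1}^N (z − a_ℓ)^{m_ℓ}) e^{λ z}. -/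
open Filter

open Polynomial in
lemma evalRat_eq (f : RatFunc ℂ) (z : ℂ) :
    evalRat f z = f.num.eval z / f.denom.eval z := rfl

open Polynomial in
lemma denom_eval_ne_of_dvd {f : RatFunc ℂ} {q : ℂ[X]} (h : f.denom ∣ q) {z : ℂ}
    (hq : q.eval z ≠ 0) : f.denom.eval z ≠ 0 := by
  obtain ⟨r, rfl⟩ := h
  simp only [Polynomial.eval_mul] at hq
  exact fun h0 => hq (by rw [h0, zero_mul])

open Polynomial in
lemma evalRat_add {f g : RatFunc ℂ} {z : ℂ} (hf : f.denom.eval z ≠ 0)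
    (hg : g.denom.eval z ≠ 0) :
    (f + g).denom.eval z ≠ 0 ∧ evalRat (f + g) z = evalRat f z + evalRat g z :=
  ⟨denom_eval_ne_of_dvd (RatFunc.denom_add_dvd f g)
      (by rw [Polynomial.eval_mul]; exact mul_ne_zero hf hg),
    RatFunc.eval_add (f := RingHom.id ℂ) (a := z) hf hg⟩

open Polynomial in
lemma evalRat_neg {g : RatFunc ℂ} {z : ℂ} (hg : g.denom.eval z ≠ 0) :
    (-g).denom.eval z ≠ 0 ∧ evalRat (-g) z = - evalRat g z := by
  have h1 : (-g) = RatFunc.C (-1) * g := by rw [map_neg, map_one, neg_one_mul]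
  have hdvd : (-g).denom ∣ g.denom := by
    have h2 := RatFunc.denom_mul_dvd (RatFunc.C (-1)) g
    rwa [← h1, RatFunc.denom_C, one_mul] at h2
  have hne : (-g).denom.eval z ≠ 0 := denom_eval_ne_of_dvd hdvd hg
  refine ⟨hne, ?_⟩
  have key := congrArg (Polynomial.eval z) (RatFunc.num_denom_neg g)
  simp only [Polynomial.eval_mul, Polynomial.eval_neg] at key
  rw [evalRat_eq, evalRat_eq]
  field_simp
  linear_combination key

open Polynomial in
lemma evalRat_sub {f g : RatFunc ℂ} {z : ℂ} (hf : f.denom.eval z ≠ 0)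
    (hg : g.denom.eval z ≠ 0) :
    (f - g).denom.eval z ≠ 0 ∧ evalRat (f - g) z = evalRat f z - evalRat g z := by
  obtain ⟨h1, h2⟩ := evalRat_neg hg
  obtain ⟨h3, h4⟩ := evalRat_add hf h1
  rw [sub_eq_add_neg]
  exact ⟨h3, by rw [h4, h2, sub_eq_add_neg]⟩

open Polynomial in
lemma evalRat_sum {ι : Type*} (s : Finset ι) (f : ι → RatFunc ℂ) (z : ℂ)
    (h : ∀ i ∈ s, (f i).denom.eval z ≠ 0) :
    (∑ i ∈ s, f i).denom.eval z ≠ 0 ∧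
      evalRat (∑ i ∈ s, f i) z = ∑ i ∈ s, evalRat (f i) z := by
  induction s using Finset.cons_induction with
  | empty => simp [evalRat_eq, RatFunc.denom_zero]
  | cons i s his ih =>
    obtain ⟨h1, h2⟩ := ih (fun j hj => h j (Finset.mem_cons_of_mem hj))
    obtain ⟨h3, h4⟩ := evalRat_add (h i (Finset.mem_cons_self i s)) h1
    rw [Finset.sum_cons, Finset.sum_cons]
    exact ⟨h3, by rw [h4, h2]⟩

open Polynomial in
lemma evalRat_algebraMap (p : ℂ[X]) (z : ℂ) :
    evalRat (algebraMap ℂ[X] (RatFunc ℂ) p) z = p.eval z := by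
  rw [evalRat_eq, RatFunc.num_algebraMap, RatFunc.denom_algebraMap]
  simp

open Polynomial in
lemma evalRat_div_poly {p q : ℂ[X]} {z : ℂ} (hq : q.eval z ≠ 0) :
    (algebraMap ℂ[X] (RatFunc ℂ) p / algebraMap ℂ[X] (RatFunc ℂ) q).denom.eval z ≠ 0 ∧
    evalRat (algebraMap ℂ[X] (RatFunc ℂ) p / algebraMap ℂ[X] (RatFunc ℂ) q) z
      = p.eval z / q.eval z := by
  have hq0 : q ≠ 0 := fun h => hq (by simp [h])
  have hd := RatFunc.denom_div_dvd p q
  refine ⟨denom_eval_ne_of_dvd hd hq, ?_⟩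
  set r := algebraMap ℂ[X] (RatFunc ℂ) p / algebraMap ℂ[X] (RatFunc ℂ) q with hr
  have hrq : r * algebraMap ℂ[X] (RatFunc ℂ) q = algebraMap ℂ[X] (RatFunc ℂ) p :=
    div_mul_cancel₀ _ (RatFunc.algebraMap_ne_zero hq0)
  have hqden : ((algebraMap ℂ[X] (RatFunc ℂ)) q).denom.eval z ≠ 0 := by
    rw [RatFunc.denom_algebraMap]; simp
  have hmul : evalRat (r * algebraMap ℂ[X] (RatFunc ℂ) q) z
      = evalRat r z * q.eval z := by
    have h5 := RatFunc.eval_mul (f := RingHom.id ℂ) (a := z)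
      (x := r) (y := algebraMap ℂ[X] (RatFunc ℂ) q)
      (denom_eval_ne_of_dvd hd hq) hqden
    rw [evalRat, h5]
    congr 1
    exact evalRat_algebraMap q z
  rw [hrq, evalRat_algebraMap] at hmul
  rw [eq_div_iff hq, ← hmul]

open Polynomial Topology in
lemma poly_eventually_ne (p : Polynomial ℂ) (hp : p ≠ 0) (x : ℂ) :
    ∀ᶠ z in 𝓝[≠] x, p.eval z ≠ 0 := by
  have hfin : ({z : ℂ | p.IsRoot z} \ {x}).Finite := (p.finite_setOf_isRoot hp).diff
  have hcl : IsClosed ({z : ℂ | p.IsRoot z} \ {x}) := hfin.isClosed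
  have hx : x ∈ ({z : ℂ | p.IsRoot z} \ {x})ᶜ := by simp
  have hmem : ({z : ℂ | p.IsRoot z} \ {x})ᶜ ∈ 𝓝 x := hcl.isOpen_compl.mem_nhds hx
  rw [eventually_nhdsWithin_iff]
  filter_upwards [hmem] with z hz hzx
  intro h0
  exact hz ⟨h0, hzx⟩

open Polynomial Topology in
lemma no_pole_of_tendsto {R : RatFunc ℂ} {x c : ℂ}
    (h : Tendsto (evalRat R) (𝓝[≠] x) (𝓝 c)) : R.denom.eval x ≠ 0 := by
  intro h0
  obtain ⟨u, v, huv⟩ := RatFunc.isCoprime_num_denom R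
  have hnum : R.num.eval x ≠ 0 := by
    intro h1
    have := congrArg (Polynomial.eval x) huv
    simp [Polynomial.eval_mul, h0, h1] at this
  have hden := poly_eventually_ne R.denom (RatFunc.denom_ne_zero R) x
  have hid : ∀ᶠ z in 𝓝[≠] x, evalRat R z * R.denom.eval z = R.num.eval z := by
    filter_upwards [hden] with z hz
    rw [evalRat_eq, div_mul_cancel₀ _ hz]
  have hd0 : Tendsto (fun z => R.denom.eval z) (𝓝[≠] x) (𝓝 0) := by
    have := (R.denom.continuous.tendsto x).mono_left
      (nhdsWithin_le_nhds : 𝓝[≠] x ≤ 𝓝 x)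
    simpa [h0] using this
  have h2 : Tendsto (fun z => evalRat R z * R.denom.eval z) (𝓝[≠] x) (𝓝 (c * 0)) :=
    h.mul hd0
  have h3 : Tendsto (fun z => R.num.eval z) (𝓝[≠] x) (𝓝 (R.num.eval x)) :=
    (R.num.continuous.tendsto x).mono_left nhdsWithin_le_nhds
  have h4 : Tendsto (fun z => evalRat R z * R.denom.eval z) (𝓝[≠] x) (𝓝 (R.num.eval x)) :=
    h3.congr' (hid.mono fun z hz => hz.symm)
  have := tendsto_nhds_unique h2 h4
  simp at this
  exact hnum this.symm

open Topology in
lemma countable_isolated (Z : Set ℂ) (h : ∀ z : ℂ, ∀ᶠ w in 𝓝[≠] z, w ∉ Z) :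
    Z.Countable := by
  rw [← Set.countable_coe_iff]
  have hd : DiscreteTopology Z := by
    rw [discreteTopology_subtype_iff]
    intro x hx
    rw [← Filter.empty_mem_iff_bot]
    have h1 : Zᶜ ∈ 𝓝[≠] (x : ℂ) := (h x).mono fun w hw => hw
    have h2 := Filter.inter_mem_inf h1 (Filter.mem_principal_self Z)
    simpa [Set.compl_inter_self] using h2
  exact (TopologicalSpace.separableSpace_iff_countable).mp inferInstance

open Topology in
lemma const_of_locally_const {U : Set ℂ} (hU : IsPreconnected U) (g : ℂ → ℂ)
    (h : ∀ x ∈ U, ∀ᶠ z in 𝓝 x, g z = g x) {x y : ℂ} (hx : x ∈ U) (hy : y ∈ U) :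
    g y = g x := by
  set A := interior {z : ℂ | g z = g x} with hA
  set B := interior {z : ℂ | g z ≠ g x} with hB
  have hsub : U ⊆ A ∪ B := by
    intro z hz
    rcases eq_or_ne (g z) (g x) with he | he
    · left
      rw [mem_interior_iff_mem_nhds]
      filter_upwards [h z hz] with w hw
      exact hw.trans he
    · right
      rw [mem_interior_iff_mem_nhds]
      filter_upwards [h z hz] with w hw
      exact fun hc => he (hw.symm.trans hc)
  have hdisj : Disjoint A B :=
    Set.disjoint_of_subset interior_subset interior_subset
      (Set.disjoint_left.mpr fun z hz hz' => hz' hz)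
  have hxA : x ∈ A := by
    rw [hA, mem_interior_iff_mem_nhds]
    filter_upwards [h x hx] with w hw using hw
  have := hU.subset_left_of_subset_union isOpen_interior isOpen_interior hdisj hsub ⟨x, hx, hxA⟩
  have h6 : y ∈ {z : ℂ | g z = g x} := interior_subset (this hy)
  exact h6

open Topology in
lemma merom_order_ne_top (y : ℂ → ℂ) (hmero : MeromorphicOn y Set.univ)
    (hnz : ∃ z : ℂ, AnalyticAt ℂ y z ∧ y z ≠ 0) (x : ℂ) :
    meromorphicOrderAt y x ≠ ⊤ := by
  set E := {z : ℂ | ∀ᶠ w in 𝓝[≠] z, y w = 0} with hE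
  have hopen : IsOpen E := by
    rw [isOpen_iff_mem_nhds]
    intro z hz
    filter_upwards [(eventually_nhdsWithin_iff.mp hz).eventually_nhds] with w hw
    rcases eq_or_ne w z with rfl | hwz
    · exact hz
    · have h2 : ∀ᶠ u in 𝓝 w, u ≠ z := isOpen_compl_singleton.eventually_mem hwz
      exact Filter.Eventually.filter_mono nhdsWithin_le_nhds
        ((hw.and h2).mono fun u hu => hu.1 hu.2)
  have hclosed : IsClosed E := by
    rw [← isOpen_compl_iff, isOpen_iff_mem_nhds]
    intro z hz
    obtain ⟨n, h_an⟩ := hmero z (Set.mem_univ z)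
    rcases h_an.eventually_eq_zero_or_eventually_ne_zero with h0 | h0
    · exfalso
      apply hz
      show ∀ᶠ w in 𝓝[≠] z, y w = 0
      have h1 : ∀ᶠ w in 𝓝[≠] z, w ≠ z := by
        filter_upwards [self_mem_nhdsWithin] with w hw using hw
      filter_upwards [h0.filter_mono nhdsWithin_le_nhds, h1] with w hw hw2
      rcases smul_eq_zero.mp hw with h3 | h3
      · exact absurd h3 (pow_ne_zero _ (sub_ne_zero.mpr hw2))
      · exact h3
    · have h1 : ∀ᶠ w in 𝓝[≠] z, y w ≠ 0 :=
        h0.mono fun w hw h2 => hw (by rw [h2, smul_zero])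
      filter_upwards [(eventually_nhdsWithin_iff.mp h1).eventually_nhds] with w hw
      intro hwE
      rcases eq_or_ne w z with rfl | hwz
      · obtain ⟨u, hu1, hu2⟩ := (h1.and hwE).exists
        exact hu1 hu2
      · have h3 : ∀ᶠ u in 𝓝[≠] w, False := by
          filter_upwards [hw.filter_mono nhdsWithin_le_nhds, hwE,
            (isOpen_compl_singleton.eventually_mem hwz).filter_mono nhdsWithin_le_nhds]
            with u h4 h5 h6
          exact (h4 h6) h5
        obtain ⟨u, hu⟩ := h3.exists
        exact hu
  obtain ⟨z0, hz0a, hz0⟩ := hnz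
  have hz0E : z0 ∉ E := by
    intro hzE
    have h1 : ∀ᶠ w in 𝓝[≠] z0, y w ≠ 0 :=
      (hz0a.continuousAt.eventually_ne hz0).filter_mono nhdsWithin_le_nhds
    obtain ⟨u, hu1, hu2⟩ := (h1.and hzE).exists
    exact hu1 hu2
  have hEempty : E = ∅ := by
    rcases isClopen_iff.mp ⟨hclosed, hopen⟩ with h | h
    · exact h
    · exact absurd (h ▸ Set.mem_univ z0) hz0E
  intro htop
  rw [meromorphicOrderAt_eq_top_iff] at htop
  have hxE : x ∈ E := htop
  rw [hEempty] at hxE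
  exact hxE

lemma prod_hasDerivAt {N : ℕ} (a : Fin N → ℂ) (m : Fin N → ℤ) (z : ℂ)
    (hz : ∀ l, z ≠ a l) :
    HasDerivAt (fun w => ∏ l, (w - a l) ^ (m l))
      ((∏ l, (z - a l) ^ (m l)) * ∑ l, (m l : ℂ) / (z - a l)) z := by
  suffices h : ∀ s : Finset (Fin N), HasDerivAt (fun w => ∏ l ∈ s, (w - a l) ^ (m l))
      ((∏ l ∈ s, (z - a l) ^ (m l)) * ∑ l ∈ s, (m l : ℂ) / (z - a l)) z from h Finset.univ
  intro s
  induction s using Finset.cons_induction with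
  | empty => simpa using hasDerivAt_const z (1 : ℂ)
  | cons i s his ih =>
    have hne : z - a i ≠ 0 := sub_ne_zero.mpr (hz i)
    have h1 : HasDerivAt (fun w : ℂ => (w - a i) ^ (m i))
        ((m i : ℂ) * (z - a i) ^ (m i - 1) * 1) z :=
      (hasDerivAt_zpow (m i) (z - a i) (Or.inl hne)).comp (h := fun w => w - a i) z ((hasDerivAt_id z).sub_const (a i))
    have h2 := h1.mul ih
    simp only [Finset.prod_cons, Finset.sum_cons]
    refine h2.congr_deriv ?_
    rw [zpow_sub_one₀ hne]
    field_simp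

open Topology Polynomial in
lemma local_residue (Q : RatFunc ℂ) (y : ℂ → ℂ) (hmero : MeromorphicOn y Set.univ)
    (hsol : ∀ z : ℂ, AnalyticAt ℂ y z → Q.denom.eval z ≠ 0 →
      deriv y z = evalRat Q z * y z)
    (hnz : ∃ z : ℂ, AnalyticAt ℂ y z ∧ y z ≠ 0) (x : ℂ) :
    ∃ mx : ℤ,
      (Q - RatFunc.C ((mx : ℂ)) / (RatFunc.X - RatFunc.C x)).denom.eval x ≠ 0 := by
  have hy : MeromorphicAt y x := hmero x (Set.mem_univ x)
  have hnetop := merom_order_ne_top y hmero hnz x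
  obtain ⟨mx, hmx⟩ := WithTop.ne_top_iff_exists.mp hnetop
  refine ⟨mx, ?_⟩
  obtain ⟨g, hg_an, hg_ne, hg_eq⟩ := (meromorphicOrderAt_eq_int_iff hy).mp hmx.symm
  have hgOn : AnalyticOnNhd ℂ g {w : ℂ | AnalyticAt ℂ g w} := fun w hw => hw
  have hderiv_an : AnalyticAt ℂ (deriv g) x := hgOn.deriv x hg_an
  set c : ℂ := deriv g x / g x with hc
  have hEa : ∀ᶠ z in 𝓝[≠] x, AnalyticAt ℂ y z := hy.eventually_analyticAt
  have hEd : ∀ᶠ z in 𝓝[≠] x, Q.denom.eval z ≠ 0 :=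
    poly_eventually_ne _ (RatFunc.denom_ne_zero Q) x
  have hEg : ∀ᶠ z in 𝓝[≠] x, g z ≠ 0 :=
    (hg_an.continuousAt.eventually_ne hg_ne).filter_mono nhdsWithin_le_nhds
  have hEga : ∀ᶠ z in 𝓝[≠] x, AnalyticAt ℂ g z :=
    hg_an.eventually_analyticAt.filter_mono nhdsWithin_le_nhds
  have hEx : ∀ᶠ z in 𝓝[≠] x, z ≠ x := by
    filter_upwards [self_mem_nhdsWithin] with z hz using hz
  have hEmod : ∀ᶠ z in 𝓝[≠] x, y =ᶠ[𝓝 z] (fun w => (w - x) ^ mx * g w) := by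
    have h1 := (eventually_nhdsWithin_iff.mp hg_eq).eventually_nhds
    rw [eventually_nhdsWithin_iff]
    filter_upwards [h1] with z hz hzx
    have h2 : ∀ᶠ w in 𝓝 z, w ≠ x := isOpen_compl_singleton.eventually_mem hzx
    filter_upwards [hz, h2] with w h3 h4
    simpa [smul_eq_mul] using h3 h4
  have hEq : ∀ᶠ z in 𝓝[≠] x,
      evalRat (Q - RatFunc.C ((mx:ℂ)) / (RatFunc.X - RatFunc.C x)) z
        = deriv g z / g z := by
    filter_upwards [hEa, hEd, hEg, hEga, hEx, hEmod] with z ha hd hgz hga hzx hmod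
    have hzsub : z - x ≠ 0 := sub_ne_zero.mpr hzx
    have h1 : HasDerivAt (fun w : ℂ => (w - x) ^ mx)
        ((mx : ℂ) * (z - x) ^ (mx - 1) * 1) z :=
      (hasDerivAt_zpow mx (z - x) (Or.inl hzsub)).comp (h := fun w => w - x) z ((hasDerivAt_id z).sub_const x)
    have h2 : HasDerivAt g (deriv g z) z := hga.differentiableAt.hasDerivAt
    have h3 := h1.mul h2
    have h4 : deriv y z
        = (mx : ℂ) * (z - x) ^ (mx - 1) * 1 * g z + (z - x) ^ mx * deriv g z :=
      hmod.deriv_eq.trans h3.deriv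
    have h5 : y z = (z - x) ^ mx * g z := hmod.eq_of_nhds
    have hyz : y z ≠ 0 := by
      rw [h5]; exact mul_ne_zero (zpow_ne_zero _ hzsub) hgz
    have h6 := hsol z ha hd
    have hterm : (algebraMap ℂ[X] (RatFunc ℂ) (Polynomial.C ((mx:ℂ))) /
        algebraMap ℂ[X] (RatFunc ℂ) (Polynomial.X - Polynomial.C x))
          = RatFunc.C ((mx:ℂ)) / (RatFunc.X - RatFunc.C x) := by
      rw [map_sub, RatFunc.algebraMap_C, RatFunc.algebraMap_C, RatFunc.algebraMap_X]
    have hq' : (Polynomial.X - Polynomial.C x).eval z ≠ 0 := by simpa using hzsub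
    obtain ⟨hden2, hval2⟩ := evalRat_div_poly (p := Polynomial.C ((mx:ℂ))) hq'
    rw [hterm] at hden2 hval2
    obtain ⟨-, hsub⟩ := evalRat_sub hd hden2
    rw [hsub, hval2]
    simp only [Polynomial.eval_C, Polynomial.eval_sub, Polynomial.eval_X]
    have hQz : evalRat Q z = deriv y z / y z := by
      rw [h6, mul_div_assoc, div_self hyz, mul_one]
    obtain ⟨u, hu, hu0⟩ : ∃ u : ℂ, (z - x) ^ mx = u ∧ u ≠ 0 :=
      ⟨_, rfl, zpow_ne_zero _ hzsub⟩
    rw [hQz, h4, h5, zpow_sub_one₀ hzsub, hu]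
    field_simp
    ring
  have htend0 : Tendsto (fun z => deriv g z / g z) (𝓝[≠] x) (𝓝 c) :=
    ((hderiv_an.continuousAt.tendsto.div hg_an.continuousAt.tendsto hg_ne).mono_left
      nhdsWithin_le_nhds)
  have htend : Tendsto (evalRat (Q - RatFunc.C ((mx:ℂ)) / (RatFunc.X - RatFunc.C x)))
      (𝓝[≠] x) (𝓝 c) := htend0.congr' (hEq.mono fun z hz => hz.symm)
  exact no_pole_of_tendsto htend

open Polynomial Topology in
lemma C_div_X_sub_C_eq (c x : ℂ) :
    RatFunc.C c / (RatFunc.X - RatFunc.C x)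
      = algebraMap ℂ[X] (RatFunc ℂ) (Polynomial.C c) /
        algebraMap ℂ[X] (RatFunc ℂ) (Polynomial.X - Polynomial.C x) := by
  rw [map_sub, RatFunc.algebraMap_C, RatFunc.algebraMap_C, RatFunc.algebraMap_X]


/-- **Scalar case of Halphen's theorem for systems (n = 1).** If `Q` is a
rational function bounded at infinity with `Q(∞) = λ` and `y' = Q y` has a
nontrivial meromorphic solution, then `Q(z) = λ + ∑ mₗ/(z − aₗ)` with integers
`mₗ` and pairwise distinct `aₗ`, and every meromorphic solution is a constant
multiple of `(∏ (z − aₗ)^{mₗ}) e^{λ z}`. -/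
theorem halphen_scalar (Q : RatFunc ℂ) (lam : ℂ)
    (hbdd : Q.num.degree ≤ Q.denom.degree)
    (hlim : Tendsto (evalRat Q) (Bornology.cobounded ℂ) (nhds lam))
    (y : ℂ → ℂ)
    (hmero : MeromorphicOn y Set.univ)
    (hsol : ∀ z : ℂ, AnalyticAt ℂ y z → Q.denom.eval z ≠ 0 →
      deriv y z = evalRat Q z * y z)
    (hnz : ∃ z : ℂ, AnalyticAt ℂ y z ∧ y z ≠ 0) :
    ∃ (N : ℕ) (a : Fin N → ℂ) (m : Fin N → ℤ),
      Function.Injective a ∧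
      -- Q has only simple poles with integer residues
      Q = RatFunc.C lam +
        ∑ l : Fin N, RatFunc.C ((m l : ℂ)) / (RatFunc.X - RatFunc.C (a l)) ∧
      -- every meromorphic solution is a constant multiple of (∏ (z−aₗ)^{mₗ}) e^{λz}
      (∀ Y : ℂ → ℂ, MeromorphicOn Y Set.univ →
        (∀ z : ℂ, AnalyticAt ℂ Y z → Q.denom.eval z ≠ 0 →
          deriv Y z = evalRat Q z * Y z) →
        ∃ c : ℂ, ∀ z : ℂ, AnalyticAt ℂ Y z → (∀ l, z ≠ a l) →
          Y z = c * (∏ l : Fin N, (z - a l) ^ (m l)) * Complex.exp (lam * z)) := by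
  classical
  set S : Finset ℂ := Q.denom.roots.toFinset with hS
  set N : ℕ := Fintype.card ↥S with hN
  set e : ↥S ≃ Fin N := Fintype.equivFin ↥S with he
  set a : Fin N → ℂ := fun l => ((e.symm l : ↥S) : ℂ) with ha
  have ha_inj : Function.Injective a := by
    intro l1 l2 h
    have := Subtype.ext (p := fun x => x ∈ S) h
    exact e.symm.injective this
  have ha_mem : ∀ l, a l ∈ S := fun l => (e.symm l).2
  have ha_surj : ∀ x ∈ S, ∃ l, a l = x := fun x hx =>
    ⟨e ⟨x, hx⟩, by simp [ha]⟩
  have hroot_iff : ∀ x : ℂ, Q.denom.eval x = 0 ↔ ∃ l, a l = x := by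
    intro x
    constructor
    · intro hx
      exact ha_surj x (Multiset.mem_toFinset.mpr
        ((Polynomial.mem_roots (RatFunc.denom_ne_zero Q)).mpr hx))
    · rintro ⟨l, rfl⟩
      have := ha_mem l
      rw [hS, Multiset.mem_toFinset, Polynomial.mem_roots (RatFunc.denom_ne_zero Q)] at this
      exact this
  have hres := fun l => local_residue Q y hmero hsol hnz (a l)
  set m : Fin N → ℤ := fun l => (hres l).choose with hm
  have hkey : ∀ l, (Q - RatFunc.C ((m l : ℂ)) /
      (RatFunc.X - RatFunc.C (a l))).denom.eval (a l) ≠ 0 := fun l => (hres l).choose_spec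
  set T : Fin N → RatFunc ℂ :=
    fun l => RatFunc.C ((m l : ℂ)) / (RatFunc.X - RatFunc.C (a l)) with hT
  have hTdvd : ∀ l, (T l).denom ∣ (Polynomial.X - Polynomial.C (a l)) := by
    intro l
    have h0 := RatFunc.denom_div_dvd (Polynomial.C ((m l : ℂ))) (Polynomial.X - Polynomial.C (a l))
    rw [← C_div_X_sub_C_eq] at h0
    exact h0
  have hTden : ∀ l (z : ℂ), z ≠ a l → (T l).denom.eval z ≠ 0 := by
    intro l z hz
    exact denom_eval_ne_of_dvd (hTdvd l)
      (by simpa using sub_ne_zero.mpr hz)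
  have hTval : ∀ l (z : ℂ), z ≠ a l → evalRat (T l) z = (m l : ℂ) / (z - a l) := by
    intro l z hz
    have h1 : (Polynomial.X - Polynomial.C (a l)).eval z ≠ 0 := by
      simpa using sub_ne_zero.mpr hz
    have h2 := (evalRat_div_poly (p := Polynomial.C ((m l : ℂ))) h1).2
    rw [← C_div_X_sub_C_eq] at h2
    show evalRat (RatFunc.C ((m l : ℂ)) / (RatFunc.X - RatFunc.C (a l))) z = (m l : ℂ) / (z - a l)
    rw [h2]
    simp
  set H : RatFunc ℂ := Q - ∑ l, T l with hH
  have claimA : ∀ x : ℂ, H.denom.eval x ≠ 0 := by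
    intro x
    by_cases hx : Q.denom.eval x = 0
    · obtain ⟨l0, hl0⟩ := (hroot_iff x).mp hx
      have hsplit : H = (Q - T l0) - ∑ l ∈ Finset.univ.erase l0, T l := by
        rw [hH, ← Finset.add_sum_erase _ T (Finset.mem_univ l0)]
        ring
      have h1 : (Q - T l0).denom.eval x ≠ 0 := by rw [← hl0]; exact hkey l0
      have h2 : ∀ l ∈ Finset.univ.erase l0, (T l).denom.eval x ≠ 0 := by
        intro l hl
        refine hTden l x fun hxe => ?_
        have : l = l0 := ha_inj (by rw [← hxe, hl0])
        exact (Finset.mem_erase.mp hl).1 this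
      have h3 := (evalRat_sum _ T x h2).1
      rw [hsplit]
      exact (evalRat_sub h1 h3).1
    · have h1 : ∀ l ∈ Finset.univ, (T l).denom.eval x ≠ 0 := by
        intro l _
        exact hTden l x fun hxe => hx ((hroot_iff x).mpr ⟨l, hxe.symm⟩)
      rw [hH]
      exact (evalRat_sub hx (evalRat_sum _ T x h1).1).1
  have claimB : H.denom = 1 := by
    by_contra hne
    have hmonic := RatFunc.monic_denom H
    have hdeg0 : H.denom.natDegree ≠ 0 :=
      fun h0 => hne (hmonic.natDegree_eq_zero.mp h0)
    have hdeg : 0 < H.denom.degree :=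
      Polynomial.natDegree_pos_iff_degree_pos.mp (Nat.pos_of_ne_zero hdeg0)
    obtain ⟨z, hz⟩ := Complex.exists_root hdeg
    exact claimA z hz
  have hHpoly : H = algebraMap (Polynomial ℂ) (RatFunc ℂ) H.num := by
    conv_lhs => rw [← RatFunc.num_div_denom H]
    rw [claimB, map_one, div_one]
  -- behaviour at infinity
  have hav : ∀ᶠ z in Bornology.cobounded ℂ, (∀ l, z ≠ a l) ∧ Q.denom.eval z ≠ 0 := by
    have h1 : ∀ᶠ z in Bornology.cobounded ℂ, ∀ l, z ≠ a l := by
      rw [Filter.eventually_all]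
      intro l
      filter_upwards [eventually_cobounded_le_norm (‖a l‖ + 1)] with z hzn
      intro hze
      rw [hze] at hzn
      linarith
    filter_upwards [h1] with z hz
    exact ⟨hz, fun h0 => by obtain ⟨l, hl⟩ := (hroot_iff z).mp h0; exact hz l hl.symm⟩
  have hHev : ∀ᶠ z in Bornology.cobounded ℂ,
      H.num.eval z = evalRat Q z - ∑ l, (m l : ℂ) / (z - a l) := by
    filter_upwards [hav] with z hz
    obtain ⟨hz1, hz2⟩ := hz
    have h1 : ∀ l ∈ Finset.univ, (T l).denom.eval z ≠ 0 := fun l _ => hTden l z (hz1 l)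
    have h2 := evalRat_sum Finset.univ T z h1
    have h3 := (evalRat_sub hz2 h2.1).2
    have h4 : evalRat H z = H.num.eval z := by
      conv_lhs => rw [hHpoly]
      exact evalRat_algebraMap _ _
    rw [← h4, hH, h3, h2.2]
    congr 1
    exact Finset.sum_congr rfl fun l _ => hTval l z (hz1 l)
  have htendsum : Tendsto (fun z : ℂ => ∑ l, (m l : ℂ) / (z - a l))
      (Bornology.cobounded ℂ) (nhds 0) := by
    have : Tendsto (fun z : ℂ => ∑ l, (m l : ℂ) / (z - a l))
        (Bornology.cobounded ℂ) (nhds (∑ l : Fin N, (0 : ℂ))) := by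
      apply tendsto_finset_sum
      intro l _
      have h1 : Tendsto (fun z : ℂ => z - a l) (Bornology.cobounded ℂ)
          (Bornology.cobounded ℂ) := by
        rw [← tendsto_norm_atTop_iff_cobounded]
        apply tendsto_atTop_mono (fun z => norm_sub_norm_le z (a l))
        simpa [sub_eq_add_neg] using tendsto_atTop_add_const_right _ (-‖a l‖) tendsto_norm_cobounded_atTop
      have h2 := Filter.tendsto_inv₀_cobounded.comp h1
      have h3 := (tendsto_const_nhds (x := ((m l : ℂ))) (f := Bornology.cobounded ℂ)).mul h2
      simpa [div_eq_mul_inv] using h3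
    simpa using this
  have htendH : Tendsto (fun z : ℂ => H.num.eval z) (Bornology.cobounded ℂ)
      (nhds (lam - 0)) := by
    refine Tendsto.congr' ?_ (hlim.sub htendsum)
    exact hHev.mono fun z hz => hz.symm
  have hnum : H.num = Polynomial.C lam := by
    have hdegle : H.num.degree ≤ 0 := by
      by_contra hdeg
      push_neg at hdeg
      have h1 := H.num.tendsto_norm_atTop hdeg
        (tendsto_norm_cobounded_atTop (E := ℂ))
      exact (not_tendsto_atTop_of_tendsto_nhds htendH.norm) h1
    obtain := Polynomial.eq_C_of_degree_le_zero hdegle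
    have hc : H.num.coeff 0 = lam := by
      have h2 : Tendsto (fun z : ℂ => H.num.eval z) (Bornology.cobounded ℂ)
          (nhds (H.num.coeff 0)) := by
        have h3 : ∀ z : ℂ, H.num.eval z = H.num.coeff 0 := by
          intro z
          conv_lhs => rw [Polynomial.eq_C_of_degree_le_zero hdegle]
          simp
        simpa [funext h3] using tendsto_const_nhds
      simpa using tendsto_nhds_unique h2 htendH
    rw [Polynomial.eq_C_of_degree_le_zero hdegle, hc]
  have hQeq : Q = RatFunc.C lam + ∑ l, T l := by
    have h1 : H = RatFunc.C lam := by
      rw [hHpoly, hnum, RatFunc.algebraMap_C]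
    rw [hH] at h1
    exact sub_eq_iff_eq_add.mp h1
  refine ⟨N, a, m, ha_inj, hQeq, ?_⟩
  -- Part 2
  intro Y hYm hYsol
  have hrootsa : ∀ z : ℂ, (∀ l, z ≠ a l) → Q.denom.eval z ≠ 0 := by
    intro z hz h0
    obtain ⟨l, hl⟩ := (hroot_iff z).mp h0
    exact hz l hl.symm
  set Z : Set ℂ := {z | ¬ AnalyticAt ℂ Y z} ∪ Set.range a with hZ
  have hZc : Z.Countable := by
    apply Set.Countable.union
    · apply countable_isolated
      intro z
      exact (hYm z (Set.mem_univ z)).eventually_analyticAt.mono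
        fun w hw hw2 => hw2 hw
    · exact (Set.finite_range a).countable
  have hUconn : IsConnected Zᶜ :=
    hZc.isConnected_compl_of_one_lt_rank (by rw [Complex.rank_real_complex]; norm_num)
  have hmemU : ∀ z : ℂ, z ∈ Zᶜ ↔ AnalyticAt ℂ Y z ∧ ∀ l, z ≠ a l := by
    intro z
    simp only [hZ, Set.mem_compl_iff, Set.mem_union, Set.mem_setOf_eq, Set.mem_range,
      not_or, not_not, not_exists]
    constructor
    · rintro ⟨h1, h2⟩; exact ⟨h1, fun l hl => h2 l hl.symm⟩
    · rintro ⟨h1, h2⟩; exact ⟨h1, fun l hl => h2 l hl.symm⟩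
  have hUopen : IsOpen Zᶜ := by
    rw [isOpen_iff_mem_nhds]
    intro z hz
    obtain ⟨hz1, hz2⟩ := (hmemU z).mp hz
    have h1 : ∀ᶠ w in nhds z, ∀ l, w ≠ a l := by
      rw [Filter.eventually_all]
      exact fun l => isOpen_compl_singleton.eventually_mem (hz2 l)
    filter_upwards [hz1.eventually_analyticAt, h1] with w hw1 hw2
    exact (hmemU w).mpr ⟨hw1, hw2⟩
  set F : ℂ → ℂ := fun w => (∏ l, (w - a l) ^ (m l)) * Complex.exp (lam * w) with hF
  have hFd : ∀ z : ℂ, (∀ l, z ≠ a l) →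
      HasDerivAt F (evalRat Q z * F z) z ∧ F z ≠ 0 := by
    intro z hz
    have h1 := prod_hasDerivAt a m z hz
    have h2 : HasDerivAt (fun w => Complex.exp (lam * w))
        (Complex.exp (lam * z) * (lam * 1)) z :=
      (Complex.hasDerivAt_exp (lam * z)).comp (h := fun w => lam * w) z ((hasDerivAt_id z).const_mul lam)
    have h3 := h1.mul h2
    have hprod0 : (∏ l, (z - a l) ^ (m l)) ≠ 0 :=
      Finset.prod_ne_zero_iff.mpr fun l _ => zpow_ne_zero _ (sub_ne_zero.mpr (hz l))
    have hq : evalRat Q z = lam + ∑ l, (m l : ℂ) / (z - a l) := by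
      have hden : ∀ l ∈ Finset.univ, (T l).denom.eval z ≠ 0 := fun l _ => hTden l z (hz l)
      have h4 := evalRat_sum Finset.univ T z hden
      have h5 := evalRat_add (f := RatFunc.C lam) (g := ∑ l, T l)
        (by rw [RatFunc.denom_C]; simp) h4.1
      conv_lhs => rw [hQeq]
      rw [h5.2, h4.2]
      congr 1
      · simp [evalRat, RatFunc.eval_C]
      · exact Finset.sum_congr rfl fun l _ => hTval l z (hz l)
    refine ⟨?_, mul_ne_zero hprod0 (Complex.exp_ne_zero _)⟩
    have hval : evalRat Q z * F z
        = (∏ l, (z - a l) ^ (m l)) * (∑ l, (m l : ℂ) / (z - a l)) * Complex.exp (lam * z)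
          + (∏ l, (z - a l) ^ (m l)) * (Complex.exp (lam * z) * (lam * 1)) := by
      rw [hq]
      simp only [hF]
      ring
    rw [hval]
    exact h3
  obtain ⟨x0, hx0⟩ := hUconn.nonempty
  set G : ℂ → ℂ := fun w => Y w / F w with hG
  have hG0 : ∀ z ∈ Zᶜ, HasDerivAt G 0 z := by
    intro z hz
    obtain ⟨hz1, hz2⟩ := (hmemU z).mp hz
    obtain ⟨hFdz, hF0⟩ := hFd z hz2
    have hYd : HasDerivAt Y (evalRat Q z * Y z) z := by
      have h1 := hz1.differentiableAt.hasDerivAt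
      rwa [hYsol z hz1 (hrootsa z hz2)] at h1
    have h2 := hYd.div hFdz hF0
    have h3 : (evalRat Q z * Y z * F z - Y z * (evalRat Q z * F z)) / F z ^ 2 = 0 := by
      rw [div_eq_zero_iff]
      left
      ring
    rw [h3] at h2
    exact h2
  have hGconst : ∀ z ∈ Zᶜ, G z = G x0 := by
    intro z hz
    apply const_of_locally_const hUconn.isPreconnected G ?_ hx0 hz
    intro x hx
    obtain ⟨ε, hε, hball⟩ := Metric.isOpen_iff.mp hUopen x hx
    have hconv : Convex ℝ (Metric.ball x ε) := convex_ball x ε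
    have hdiff : DifferentiableOn ℂ G (Metric.ball x ε) := fun w hw =>
      ((hG0 w (hball hw)).differentiableAt).differentiableWithinAt
    have hfz : ∀ w ∈ Metric.ball x ε, fderivWithin ℂ G (Metric.ball x ε) w = 0 := by
      intro w hw
      rw [fderivWithin_of_isOpen Metric.isOpen_ball hw]
      have h6 := (hG0 w (hball hw)).hasFDerivAt.fderiv
      rw [h6]
      ext v
      simp
    filter_upwards [Metric.ball_mem_nhds x hε] with w hw
    exact hconv.is_const_of_fderivWithin_eq_zero hdiff hfz hw (Metric.mem_ball_self hε)
  refine ⟨G x0, ?_⟩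
  intro z hz1 hz2
  have hzU : z ∈ Zᶜ := (hmemU z).mpr ⟨hz1, hz2⟩
  have h7 := hGconst z hzU
  have hF0 := (hFd z hz2).2
  have h8 : Y z = G x0 * F z := by
    rw [← h7]
    show Y z = Y z / F z * F z
    rw [div_mul_cancel₀ _ hF0]
  rw [h8]
  simp only [hF]
  ring
end

section
/- Frobenius solutions, non-integer index difference: Let q be analytic in a punctured neighborhood of z_0 ∈ ℂ with convergent Laurent expansion q(z) = Σ_{j=0}^∞ q_j (z − z_0)^{j−2}, where q_0 = −s(s+1) for some s ∈ ℂ with Re(2s+1) ≥ 0, and suppose 2s+1 is not an integer. Set f_0(σ) = (s+σ)(s+1−σ). For σ ∈ {s+1, −s} define coefficients c_j(σ) by c_0(σ) = 1 and c_j(σ) = (Σ_{m=0}^{j−1} q_{j−m} c_m(σ)) / f_0(σ+j) for j ≥ 1 (the denominators f_0(σ+j) are nonzero since 2s+1 ∉ ℤ). Then each of the series w(σ, z) = Σ_{j=0}^∞ c_j(σ)(z − z_0)^{σ+j} converges in a punctured neighborhood of z_0 (for a fixed branch of (z − z_0)^σ), and w(s+1, ·) and w(−s, ·) are two linearly independent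 solutions of y'' + q y = 0 there. -/
/-- The indicial polynomial quantity `f₀(σ) = (s + σ)(s + 1 − σ)`. -/
def indicial (s σ : ℂ) : ℂ := (s + σ) * (s + 1 - σ)

open Complex Finset

lemma exists_norm_le_of_summable (f : ℕ → ℂ) (hf : Summable f) : ∃ C, ∀ n, ‖f n‖ ≤ C := by
  obtain ⟨C, hC⟩ := (hf.tendsto_atTop_zero.norm.bddAbove_range)
  exact ⟨C, fun n => hC ⟨n, rfl⟩⟩

lemma summable_quad (B : ℝ) {t : ℝ} (ht0 : 0 ≤ t) (ht : t < 1) :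
    Summable (fun j : ℕ => (B + j)^2 * t^j) := by
  have hn : ‖t‖ < 1 := by rwa [Real.norm_eq_abs, _root_.abs_of_nonneg ht0]
  have h0 : Summable (fun j : ℕ => (j:ℝ)^0 * t^j) := summable_pow_mul_geometric_of_norm_lt_one 0 hn
  have h1 : Summable (fun j : ℕ => (j:ℝ)^1 * t^j) := summable_pow_mul_geometric_of_norm_lt_one 1 hn
  have h2 : Summable (fun j : ℕ => (j:ℝ)^2 * t^j) := summable_pow_mul_geometric_of_norm_lt_one 2 hn
  exact (h2.add ((h1.mul_left (2*B)).add (h0.mul_left (B^2)))).congr fun j => by ring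

-- `indicial s (s+1+j) = (2s+1+j) * (-j)` and `indicial s (-s+j) = j * (2s+1-j)`
lemma delta_bound (s : ℂ) (hre : 0 ≤ (2 * s + 1).re)
    (hni : ∀ k : ℤ, (2 * s + 1 : ℂ) ≠ (k : ℂ)) :
    ∃ δ : ℝ, 0 < δ ∧ δ ≤ 1 ∧ ∀ j : ℕ, 1 ≤ j →
      δ ≤ ‖indicial s (s + 1 + (j:ℂ))‖ ∧ δ ≤ ‖indicial s (-s + (j:ℂ))‖ := by
  set t : ℂ := 2 * s + 1 with ht
  set N : ℕ := ⌈‖t‖⌉₊ + 1 with hN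
  have hne : (Finset.Icc 1 N).Nonempty := ⟨1, by simp [hN]⟩
  set δ₁ : ℝ := (Finset.Icc 1 N).inf' hne (fun j : ℕ => ‖t - (j:ℂ)‖) with hδ₁
  have hδ₁pos : 0 < δ₁ := by
    rw [Finset.lt_inf'_iff]
    intro j hj
    have : t ≠ (j:ℂ) := by simpa using hni (j:ℤ)
    simpa [norm_pos_iff, sub_eq_zero] using this
  refine ⟨min 1 δ₁, by positivity, min_le_left _ _, fun j hj => ?_⟩
  have hj1 : (1:ℝ) ≤ (j:ℝ) := by exact_mod_cast hj
  have hbase : min 1 δ₁ ≤ ‖t - (j:ℂ)‖ := by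
    rcases le_or_gt j N with h | h
    · exact le_trans (min_le_right _ _) (Finset.inf'_le _ (Finset.mem_Icc.2 ⟨hj, h⟩))
    · refine le_trans (min_le_left _ _) ?_
      have h1 : ‖(j:ℂ)‖ - ‖t‖ ≤ ‖t - (j:ℂ)‖ := by
        simpa [norm_sub_rev] using norm_sub_norm_le ((j:ℂ)) t
      have h2 : ‖t‖ ≤ (⌈‖t‖⌉₊ : ℝ) := Nat.le_ceil _
      have h3 : (N:ℝ) + 1 ≤ (j:ℝ) := by exact_mod_cast h
      have h4 : ‖(j:ℂ)‖ = (j:ℝ) := by simp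
      push_cast [hN] at h3
      nlinarith
  constructor
  · have : indicial s (s + 1 + (j:ℂ)) = (t + j) * (-(j:ℂ)) := by
      simp only [indicial, ht]; ring
    rw [this, norm_mul]
    have h1 : (1:ℝ) ≤ ‖t + (j:ℂ)‖ := by
      have : (1:ℝ) ≤ (t + (j:ℂ)).re := by
        simp only [Complex.add_re, Complex.natCast_re]
        linarith
      calc (1:ℝ) ≤ (t + (j:ℂ)).re := this
        _ ≤ ‖t + (j:ℂ)‖ := Complex.re_le_norm _
    have h2 : ‖(-(j:ℂ))‖ = (j:ℝ) := by simp
    calc min 1 δ₁ ≤ 1 := min_le_left _ _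
      _ ≤ ‖t + (j:ℂ)‖ * ‖(-(j:ℂ))‖ := by rw [h2]; nlinarith
  · have : indicial s (-s + (j:ℂ)) = (j:ℂ) * (t - j) := by
      simp only [indicial, ht]; ring
    rw [this, norm_mul]
    have h2 : ‖(j:ℂ)‖ = (j:ℝ) := by simp
    calc min 1 δ₁ ≤ ‖t - (j:ℂ)‖ := hbase
      _ ≤ ‖(j:ℂ)‖ * ‖t - (j:ℂ)‖ := by rw [h2]; nlinarith [norm_nonneg (t - (j:ℂ))]


lemma frob_coeff_bound (s σ : ℂ) (qc c : ℕ → ℂ) (r M δ : ℝ)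
    (hr : 0 < r) (hM : 0 ≤ M) (hδ : 0 < δ)
    (hqc : ∀ j : ℕ, ‖qc j‖ ≤ M / r ^ j)
    (hind : ∀ j : ℕ, 1 ≤ j → δ ≤ ‖indicial s (σ + (j:ℂ))‖)
    (hc0 : c 0 = 1)
    (hc : ∀ j : ℕ, 1 ≤ j →
      c j = (∑ m ∈ Finset.range j, qc (j - m) * c m) / indicial s (σ + (j:ℂ))) :
    ∀ j, ‖c j‖ ≤ ((1 + M / δ) / r) ^ j := by
  have hMδ : 0 ≤ M / δ := by positivity
  set K : ℝ := 1 + M / δ with hK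
  have hK1 : 1 ≤ K := by rw [hK]; linarith
  have key : ∀ j : ℕ, (∑ m ∈ Finset.range (j+1), ‖c m‖ * r ^ m) ≤ K ^ j := by
    intro j
    induction j with
    | zero => simp [hc0]
    | succ j ih =>
      rw [Finset.sum_range_succ]
      have hnum : ‖c (j+1)‖ ≤ (∑ m ∈ Finset.range (j+1), ‖qc (j+1-m)‖ * ‖c m‖) / δ := by
        rw [hc (j+1) (by omega), norm_div]
        refine div_le_div₀ (by positivity) ?_ hδ (hind (j+1) (by omega))
        exact le_trans (norm_sum_le _ _) (le_of_eq (by simp [norm_mul]))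
      have h2 : ∀ m ∈ Finset.range (j+1),
          ‖qc (j+1-m)‖ * ‖c m‖ * r^(j+1) ≤ M * (‖c m‖ * r^m) := by
        intro m hm
        have hmle : m ≤ j := by simpa [Nat.lt_succ_iff] using hm
        have hpow : r ^ (j+1) = r ^ (j+1-m) * r ^ m := by rw [← pow_add]; congr 1; omega
        have hq := hqc (j+1-m)
        have hrm : (0:ℝ) < r ^ (j+1-m) := pow_pos hr _
        calc ‖qc (j+1-m)‖ * ‖c m‖ * r^(j+1)
            ≤ (M / r^(j+1-m)) * ‖c m‖ * r^(j+1) := by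
              have := pow_pos hr (j+1)
              exact mul_le_mul_of_nonneg_right
                (mul_le_mul_of_nonneg_right hq (norm_nonneg _)) (by positivity)
          _ = M * (‖c m‖ * r^m) := by rw [hpow]; field_simp
      have hstep : ‖c (j+1)‖ * r ^ (j+1) ≤ (M/δ) * ∑ m ∈ Finset.range (j+1), ‖c m‖ * r ^ m := by
        calc ‖c (j+1)‖ * r ^ (j+1)
            ≤ ((∑ m ∈ Finset.range (j+1), ‖qc (j+1-m)‖ * ‖c m‖) / δ) * r ^ (j+1) :=
              mul_le_mul_of_nonneg_right hnum (by positivity)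
          _ = (∑ m ∈ Finset.range (j+1), ‖qc (j+1-m)‖ * ‖c m‖ * r ^ (j+1)) / δ := by
              rw [div_mul_eq_mul_div, Finset.sum_mul]
          _ ≤ (M * ∑ m ∈ Finset.range (j+1), ‖c m‖ * r ^ m) / δ := by
              gcongr
              rw [Finset.mul_sum]
              exact Finset.sum_le_sum h2
          _ = (M/δ) * ∑ m ∈ Finset.range (j+1), ‖c m‖ * r ^ m := by ring
      calc (∑ m ∈ Finset.range (j+1), ‖c m‖ * r ^ m) + ‖c (j+1)‖ * r^(j+1)
          ≤ K ^ j + (M/δ) * K ^ j := by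
            refine add_le_add ih (hstep.trans ?_)
            exact mul_le_mul_of_nonneg_left ih hMδ
        _ = K ^ (j+1) := by rw [pow_succ]; ring
  intro j
  have h1 : ‖c j‖ * r ^ j ≤ K ^ j := by
    refine le_trans ?_ (key j)
    refine Finset.single_le_sum (f := fun m => ‖c m‖ * r ^ m) ?_ (Finset.self_mem_range_succ j)
    intro m _; positivity
  rw [div_pow, le_div_iff₀ (by positivity)]
  exact h1


lemma frob_pointwise (z₀ s σ : ℂ) (q : ℂ → ℂ) (qc c : ℕ → ℂ) (ρ r M A ρ' : ℝ)
    (hq : ∀ z : ℂ, z ≠ z₀ → dist z z₀ < ρ →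
      HasSum (fun j : ℕ => qc j * (z - z₀) ^ ((j : ℤ) - 2)) (q z))
    (hq0 : qc 0 = -(s * (s + 1)))
    (hσ0 : indicial s σ = 0)
    (hrec : ∀ j : ℕ, 1 ≤ j →
      indicial s (σ + (j:ℂ)) * c j = ∑ m ∈ Finset.range j, qc (j - m) * c m)
    (hr : 0 < r) (hrρ : r < ρ) (hM : 0 ≤ M) (hqc : ∀ j, ‖qc j‖ ≤ M / r ^ j)
    (hA : 0 < A) (hcA : ∀ j, ‖c j‖ ≤ A ^ j)
    (hρ'0 : 0 < ρ') (hρ'A : ρ' ≤ 1 / (2*A)) (hρ'r : ρ' ≤ r / 2) :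
    ∀ z : ℂ, z - z₀ ∈ Complex.slitPlane → dist z z₀ < ρ' →
      HasSum (fun j : ℕ => c j * (z - z₀) ^ (σ + (j : ℂ)))
        (∑' j : ℕ, c j * (z - z₀) ^ (σ + (j : ℂ))) ∧
      iteratedDeriv 2 (fun z => ∑' j : ℕ, c j * (z - z₀) ^ (σ + (j : ℂ))) z
        + q z * (∑' j : ℕ, c j * (z - z₀) ^ (σ + (j : ℂ))) = 0 := by
  intro z hslit hdist
  have hh0 : z - z₀ ≠ 0 := Complex.slitPlane_ne_zero hslit
  have hz0 : z ≠ z₀ := sub_ne_zero.mp hh0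
  have habs : ‖z - z₀‖ < ρ' := by rwa [dist_eq_norm] at hdist
  have habs0 : 0 < ‖z - z₀‖ := norm_pos_iff.2 hh0
  have hsplit : ∀ (y : ℂ), y ≠ 0 → ∀ (τ : ℂ) (j : ℕ), y ^ (τ + (j:ℂ)) = y ^ τ * y ^ j := by
    intro y hy τ j; rw [cpow_add _ _ hy, cpow_natCast]
  have hAρ' : A * ρ' ≤ 1/2 := by
    have h1 : A * ρ' ≤ A * (1/(2*A)) := mul_le_mul_of_nonneg_left hρ'A hA.le
    have h2 : A * (1/(2*A)) = 1/2 := by field_simp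
    linarith
  -- norm-summability of the main series on the punctured disc
  have hsummain' : ∀ y : ℂ, y - z₀ ≠ 0 → ‖y - z₀‖ < ρ' →
      Summable (fun j : ℕ => ‖c j * (y - z₀) ^ (σ + (j:ℂ))‖) := by
    intro y h0 hy
    refine Summable.of_nonneg_of_le (fun j => norm_nonneg _)
      (fun j => ?_) (((summable_geometric_of_lt_one (by positivity)
        (lt_of_le_of_lt hAρ' (by norm_num))).mul_left (‖(y - z₀) ^ σ‖)))
    calc ‖c j * ((y - z₀) ^ (σ + (j:ℂ)))‖
        = ‖(y - z₀) ^ σ‖ * (‖c j‖ * ‖y - z₀‖^j) := by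
          rw [hsplit _ h0 σ j, norm_mul, norm_mul, norm_pow]; ring
      _ ≤ ‖(y - z₀) ^ σ‖ * (A^j * ρ'^j) :=
            mul_le_mul_of_nonneg_left (mul_le_mul (hcA j)
              (pow_le_pow_left₀ (norm_nonneg _) hy.le j) (by positivity) (by positivity))
              (norm_nonneg _)
      _ = ‖(y - z₀) ^ σ‖ * (A*ρ')^j := by rw [mul_pow]
  have hsummain : ∀ y : ℂ, y - z₀ ≠ 0 → ‖y - z₀‖ < ρ' →
      Summable (fun j : ℕ => c j * (y - z₀) ^ (σ + (j:ℂ))) :=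
    fun y h0 hy => (hsummain' y h0 hy).of_norm
  refine ⟨(hsummain z hh0 habs).hasSum, ?_⟩
  -- the open ball for termwise differentiation
  obtain ⟨ε₀, hε₀pos, hε₀⟩ := Metric.isOpen_iff.mp
    (Complex.isOpen_slitPlane.preimage (continuous_id.sub continuous_const)) z hslit
  set ε : ℝ := min ε₀ ((ρ' - ‖z - z₀‖)/2) with hε
  have hεpos : 0 < ε := lt_min hε₀pos (by linarith)
  set R : ℝ := (‖z - z₀‖ + ρ')/2 with hR
  have hRρ' : R < ρ' := by rw [hR]; linarith
  have hR0 : 0 < R := by positivity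
  have hTslit : ∀ y ∈ Metric.ball z ε, y - z₀ ∈ Complex.slitPlane := by
    intro y hy
    exact hε₀ (Metric.ball_subset_ball (min_le_left _ _) hy)
  have hTR : ∀ y ∈ Metric.ball z ε, ‖y - z₀‖ ≤ R := by
    intro y hy
    have h1 : ‖y - z‖ < ε := by rwa [Metric.mem_ball, dist_eq_norm] at hy
    have h2 : ε ≤ (ρ' - ‖z - z₀‖)/2 := min_le_right _ _
    calc ‖y - z₀‖ = ‖(y - z) + (z - z₀)‖ := by ring_nf
      _ ≤ ‖y - z‖ + ‖z - z₀‖ := norm_add_le _ _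
      _ ≤ R := by rw [hR]; linarith
  have hball2 : Metric.ball z (ε/2) ⊆ Metric.ball z ε :=
    Metric.ball_subset_ball (by linarith)
  have hzT : z ∈ Metric.ball z (ε/2) := Metric.mem_ball_self (by linarith)
  -- compactness bounds for the cpow factors
  have hDbound : ∀ τ : ℂ, ∃ D : ℝ, 0 ≤ D ∧
      ∀ y ∈ Metric.ball z (ε/2), ‖(y - z₀) ^ τ‖ ≤ D := by
    intro τ
    have hcont : ContinuousOn (fun y : ℂ => (y - z₀) ^ τ) (Metric.closedBall z (ε/2)) := by
      intro y hy
      have hyT : y ∈ Metric.ball z ε := by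
        have : dist y z ≤ ε/2 := Metric.mem_closedBall.mp hy
        exact Metric.mem_ball.mpr (lt_of_le_of_lt this (by linarith))
      have hf : ContinuousAt (fun y : ℂ => y - z₀) y :=
        (continuous_id.sub continuous_const).continuousAt
      have hg : ContinuousAt (fun w : ℂ => w ^ τ) (y - z₀) :=
        continuousAt_cpow_const (hTslit y hyT)
      exact (ContinuousAt.comp (x := y) hg hf).continuousWithinAt
    obtain ⟨D, hD⟩ := (isCompact_closedBall z (ε/2)).exists_bound_of_continuousOn hcont
    refine ⟨D, le_trans (norm_nonneg ((z - z₀) ^ τ)) (hD z (Metric.mem_closedBall_self (by linarith))), ?_⟩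
    exact fun y hy => hD y (Metric.ball_subset_closedBall hy)
  obtain ⟨D1, hD1nn, hD1⟩ := hDbound (σ - 1)
  obtain ⟨D2, hD2nn, hD2⟩ := hDbound (σ - 2)
  set B : ℝ := ‖σ‖ + 2 with hB
  have hBj : ∀ j : ℕ, ‖σ + (j:ℂ)‖ ≤ B + j := by
    intro j
    calc ‖σ + (j:ℂ)‖ ≤ ‖σ‖ + ‖(j:ℂ)‖ := norm_add_le _ _
      _ = ‖σ‖ + (j:ℝ) := by simp
      _ ≤ B + j := by rw [hB]; linarith
  have hBj1 : ∀ j : ℕ, ‖σ + (j:ℂ) - 1‖ ≤ B + j := by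
    intro j
    calc ‖σ + (j:ℂ) - 1‖ ≤ ‖σ + (j:ℂ)‖ + ‖(1:ℂ)‖ := norm_sub_le _ _
      _ ≤ (‖σ‖ + ‖(j:ℂ)‖) + 1 := by
          simp only [norm_one]
          exact add_le_add_left (norm_add_le _ _) 1
      _ = ‖σ‖ + (j:ℝ) + 1 := by simp
      _ ≤ B + j := by rw [hB]; linarith
  set t : ℝ := A * R with htd
  have ht0 : 0 ≤ t := by positivity
  have ht1 : t < 1 := by
    have : A * R < A * ρ' := by exact mul_lt_mul_of_pos_left hRρ' hA
    linarith
  have hBjpos : ∀ j : ℕ, (1:ℝ) ≤ B + j := by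
    intro j
    have h1 : (0:ℝ) ≤ (j:ℝ) := Nat.cast_nonneg j
    have h2 : (0:ℝ) ≤ ‖σ‖ := norm_nonneg σ
    rw [hB]; linarith
  -- uniform bounds for the differentiated series on the small ball
  have hARj : ∀ (y : ℂ), y ∈ Metric.ball z (ε/2) → ∀ j : ℕ, ‖c j‖ * ‖y - z₀‖^j ≤ t^j := by
    intro y hy j
    calc ‖c j‖ * ‖y - z₀‖^j ≤ A^j * R^j :=
          mul_le_mul (hcA j) (pow_le_pow_left₀ (norm_nonneg _) (hTR y (hball2 hy)) j)
            (by positivity) (by positivity)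
      _ = t^j := by rw [htd, mul_pow]
  have hbound1 : ∀ (j : ℕ) (y : ℂ), y ∈ Metric.ball z (ε/2) →
      ‖c j * ((σ + (j:ℂ)) * (y - z₀) ^ (σ + (j:ℂ) - 1))‖ ≤ D1 * ((B+j)^2 * t^j) := by
    intro j y hy
    have hy0 : y - z₀ ≠ 0 := Complex.slitPlane_ne_zero (hTslit y (hball2 hy))
    have hexp : σ + (j:ℂ) - 1 = (σ - 1) + (j:ℂ) := by ring
    rw [hexp, hsplit _ hy0 (σ - 1) j]
    have : ‖c j * ((σ + (j:ℂ)) * ((y - z₀) ^ (σ - 1) * (y - z₀) ^ j))‖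
        = ‖σ + (j:ℂ)‖ * ‖(y - z₀) ^ (σ - 1)‖ * (‖c j‖ * ‖y - z₀‖^j) := by
      simp [norm_mul, norm_pow]; ring
    rw [this]
    have bnn : (0:ℝ) ≤ B + j := le_trans zero_le_one (hBjpos j)
    calc ‖σ + (j:ℂ)‖ * ‖(y - z₀) ^ (σ - 1)‖ * (‖c j‖ * ‖y - z₀‖^j)
        ≤ ((B+j) * D1) * t^j :=
          mul_le_mul (mul_le_mul (hBj j) (hD1 y hy) (norm_nonneg _) bnn)
            (hARj y hy j) (by positivity) (mul_nonneg bnn hD1nn)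
      _ ≤ D1 * ((B+j)^2 * t^j) := by
          have h1 : (B+j) ≤ (B+j)^2 := by nlinarith [hBjpos j]
          have h2 : (0:ℝ) ≤ t^j := by positivity
          have h3 : (B+j)*t^j ≤ (B+j)^2*t^j := mul_le_mul_of_nonneg_right h1 h2
          calc ((B+j) * D1) * t^j = D1 * ((B+j)*t^j) := by ring
            _ ≤ D1 * ((B+j)^2*t^j) := mul_le_mul_of_nonneg_left h3 hD1nn
  have hbound2 : ∀ (j : ℕ) (y : ℂ), y ∈ Metric.ball z (ε/2) →
      ‖c j * ((σ + (j:ℂ)) * ((σ + (j:ℂ) - 1) * (y - z₀) ^ (σ + (j:ℂ) - 2)))‖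
        ≤ D2 * ((B+j)^2 * t^j) := by
    intro j y hy
    have hy0 : y - z₀ ≠ 0 := Complex.slitPlane_ne_zero (hTslit y (hball2 hy))
    have hexp : σ + (j:ℂ) - 2 = (σ - 2) + (j:ℂ) := by ring
    rw [hexp, hsplit _ hy0 (σ - 2) j]
    have : ‖c j * ((σ + (j:ℂ)) * ((σ + (j:ℂ) - 1) * ((y - z₀) ^ (σ - 2) * (y - z₀) ^ j)))‖
        = (‖σ + (j:ℂ)‖ * ‖σ + (j:ℂ) - 1‖) * ‖(y - z₀) ^ (σ - 2)‖ * (‖c j‖ * ‖y - z₀‖^j) := by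
      simp [norm_mul, norm_pow]; ring
    rw [this]
    have bnn : (0:ℝ) ≤ B + j := le_trans zero_le_one (hBjpos j)
    calc (‖σ + (j:ℂ)‖ * ‖σ + (j:ℂ) - 1‖) * ‖(y - z₀) ^ (σ - 2)‖ * (‖c j‖ * ‖y - z₀‖^j)
        ≤ (((B+j) * (B+j)) * D2) * t^j :=
          mul_le_mul (mul_le_mul (mul_le_mul (hBj j) (hBj1 j) (norm_nonneg _) bnn)
              (hD2 y hy) (norm_nonneg _) (mul_nonneg bnn bnn))
            (hARj y hy j) (by positivity) (mul_nonneg (mul_nonneg bnn bnn) hD2nn)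
      _ = D2 * ((B+j)^2 * t^j) := by ring
  -- summable bound sequences
  have hu1 : Summable (fun j : ℕ => D1 * ((B+j)^2 * t^j)) := (summable_quad B ht0 ht1).mul_left D1
  have hu2 : Summable (fun j : ℕ => D2 * ((B+j)^2 * t^j)) := (summable_quad B ht0 ht1).mul_left D2
  -- termwise derivatives
  have hder1 : ∀ (j : ℕ) (y : ℂ), y ∈ Metric.ball z (ε/2) →
      HasDerivAt (fun x => c j * (x - z₀) ^ (σ + (j:ℂ)))
        (c j * ((σ + (j:ℂ)) * (y - z₀) ^ (σ + (j:ℂ) - 1))) y := by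
    intro j y hy
    have hy' : y - z₀ ∈ Complex.slitPlane := hTslit y (hball2 hy)
    have H : HasDerivAt (fun y : ℂ => y - z₀) 1 y := (hasDerivAt_id y).sub_const z₀
    have H2 := (H.cpow_const (c := σ + (j:ℂ)) hy').const_mul (c j)
    simpa only [mul_one, mul_assoc] using H2
  have hder2 : ∀ (j : ℕ) (y : ℂ), y ∈ Metric.ball z (ε/2) →
      HasDerivAt (fun x => c j * ((σ + (j:ℂ)) * (x - z₀) ^ (σ + (j:ℂ) - 1)))
        (c j * ((σ + (j:ℂ)) * ((σ + (j:ℂ) - 1) * (y - z₀) ^ (σ + (j:ℂ) - 2)))) y := by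
    intro j y hy
    have hy' : y - z₀ ∈ Complex.slitPlane := hTslit y (hball2 hy)
    have H : HasDerivAt (fun y : ℂ => y - z₀) 1 y := (hasDerivAt_id y).sub_const z₀
    have H2 := (H.cpow_const (c := σ + (j:ℂ) - 1) hy').const_mul (c j * (σ + (j:ℂ)))
    have hexp : σ + (j:ℂ) - 1 - 1 = σ + (j:ℂ) - 2 := by ring
    rw [hexp] at H2
    simpa only [mul_one, mul_assoc] using H2
  have hsum0z : Summable (fun j : ℕ => c j * (z - z₀) ^ (σ + (j:ℂ))) := hsummain z hh0 habs
  have hsum1z : Summable (fun j : ℕ => c j * ((σ + (j:ℂ)) * (z - z₀) ^ (σ + (j:ℂ) - 1))) :=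
    Summable.of_norm_bounded hu1 (fun j => hbound1 j z hzT)
  have happly1 : ∀ y ∈ Metric.ball z (ε/2),
      HasDerivAt (fun x => ∑' j : ℕ, c j * (x - z₀) ^ (σ + (j:ℂ)))
        (∑' j : ℕ, c j * ((σ + (j:ℂ)) * (y - z₀) ^ (σ + (j:ℂ) - 1))) y := by
    intro y hy
    exact hasDerivAt_tsum_of_isPreconnected hu1 Metric.isOpen_ball
      (convex_ball z (ε/2)).isPreconnected hder1 hbound1 hzT hsum0z hy
  have happly2 : ∀ y ∈ Metric.ball z (ε/2),
      HasDerivAt (fun x => ∑' j : ℕ, c j * ((σ + (j:ℂ)) * (x - z₀) ^ (σ + (j:ℂ) - 1)))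
        (∑' j : ℕ, c j * ((σ + (j:ℂ)) * ((σ + (j:ℂ) - 1) * (y - z₀) ^ (σ + (j:ℂ) - 2)))) y := by
    intro y hy
    exact hasDerivAt_tsum_of_isPreconnected hu2 Metric.isOpen_ball
      (convex_ball z (ε/2)).isPreconnected hder2 hbound2 hzT hsum1z hy
  have hEq : (deriv (fun x => ∑' j : ℕ, c j * (x - z₀) ^ (σ + (j:ℂ))))
      =ᶠ[nhds z] (fun x => ∑' j : ℕ, c j * ((σ + (j:ℂ)) * (x - z₀) ^ (σ + (j:ℂ) - 1))) := by
    filter_upwards [Metric.isOpen_ball.mem_nhds hzT] with y hy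
    exact (happly1 y hy).deriv
  have hD2w : HasDerivAt (deriv (fun x => ∑' j : ℕ, c j * (x - z₀) ^ (σ + (j:ℂ))))
      (∑' j : ℕ, c j * ((σ + (j:ℂ)) * ((σ + (j:ℂ) - 1) * (z - z₀) ^ (σ + (j:ℂ) - 2)))) z :=
    (happly2 z hzT).congr_of_eventuallyEq hEq
  have hit2 : iteratedDeriv 2 (fun x => ∑' j : ℕ, c j * (x - z₀) ^ (σ + (j:ℂ))) z
      = ∑' j : ℕ, c j * ((σ + (j:ℂ)) * ((σ + (j:ℂ) - 1) * (z - z₀) ^ (σ + (j:ℂ) - 2))) := by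
    rw [show (2:ℕ) = 1 + 1 from rfl, iteratedDeriv_succ, iteratedDeriv_one]
    exact hD2w.deriv
  -- algebraic identification of the sums
  set P : ℂ := (z - z₀) ^ σ / (z - z₀) ^ 2 with hP
  have h2c : (2:ℂ) = ((2:ℕ):ℂ) := by norm_num
  have hg2P : ∀ j : ℕ, c j * ((σ + (j:ℂ)) * ((σ + (j:ℂ) - 1) * (z - z₀) ^ (σ + (j:ℂ) - 2)))
      = (c j * ((σ + (j:ℂ)) * (σ + (j:ℂ) - 1))) * (P * (z - z₀)^j) := by
    intro j
    have e : σ + (j:ℂ) - 2 = (σ - 2) + (j:ℂ) := by ring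
    have h1 : (z - z₀) ^ (σ + (j:ℂ) - 2) = P * (z - z₀)^j := by
      rw [e, hsplit _ hh0 (σ - 2) j, cpow_sub _ _ hh0, h2c, cpow_natCast]
    rw [h1]; ring
  have hρ'ρ : ρ' < ρ := by linarith
  have hqz : HasSum (fun i : ℕ => qc i * (z - z₀) ^ ((i:ℤ) - 2)) (q z) :=
    hq z hz0 (by rw [dist_eq_norm]; linarith)
  have hratio : ‖z - z₀‖ / r < 1 := (div_lt_one hr).2 (by linarith)
  have hfnorm : Summable (fun i : ℕ => ‖qc i * (z - z₀) ^ ((i:ℤ) - 2)‖) := by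
    refine Summable.of_nonneg_of_le (fun i => norm_nonneg _) (fun i => ?_)
      ((summable_geometric_of_lt_one (by positivity) hratio).mul_left (M / ‖z - z₀‖^2))
    have hz2 : ‖z - z₀‖ ^ ((i:ℤ) - 2) = ‖z - z₀‖^i / ‖z - z₀‖^2 := by
      rw [zpow_sub₀ (ne_of_gt habs0), zpow_natCast,
        show (2:ℤ) = ((2:ℕ):ℤ) by norm_num, zpow_natCast]
    calc ‖qc i * (z - z₀) ^ ((i:ℤ) - 2)‖ = ‖qc i‖ * (‖z - z₀‖^i / ‖z - z₀‖^2) := by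
          rw [norm_mul, norm_zpow, hz2]
      _ ≤ (M / r^i) * (‖z - z₀‖^i / ‖z - z₀‖^2) := by
          refine mul_le_mul_of_nonneg_right (hqc i) (by positivity)
      _ = (M / ‖z - z₀‖^2) * (‖z - z₀‖/r)^i := by rw [div_pow]; ring
  have hgnorm := hsummain' z hh0 habs
  have hprod := tsum_mul_tsum_eq_tsum_sum_antidiagonal_of_summable_norm hfnorm hgnorm
  have hqzt : q z = ∑' i : ℕ, qc i * (z - z₀) ^ ((i:ℤ) - 2) := hqz.tsum_eq.symm
  have hanti : ∀ n : ℕ, (∑ kl ∈ Finset.HasAntidiagonal.antidiagonal n,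
        (qc kl.1 * (z - z₀) ^ ((kl.1:ℤ) - 2)) * (c kl.2 * (z - z₀) ^ (σ + (kl.2:ℂ))))
      = (∑ m ∈ Finset.range (n+1), qc (n - m) * c m) * (P * (z - z₀)^n) := by
    intro n
    rw [Finset.Nat.sum_antidiagonal_eq_sum_range_succ_mk]
    have hterm : ∀ k ∈ Finset.range (n+1),
        (qc k * (z - z₀) ^ ((k:ℤ) - 2)) * (c (n-k) * (z - z₀) ^ (σ + ((n-k:ℕ):ℂ)))
        = (qc k * c (n-k)) * (P * (z - z₀)^n) := by
      intro k hk
      have hkn : k ≤ n := Nat.lt_succ_iff.mp (Finset.mem_range.mp hk)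
      have h1 : (z - z₀) ^ ((k:ℤ) - 2) = (z - z₀)^k / (z - z₀)^2 := by
        rw [zpow_sub₀ hh0, zpow_natCast,
          show (2:ℤ) = ((2:ℕ):ℤ) by norm_num, zpow_natCast]
      have h2 : (z - z₀) ^ (σ + ((n-k:ℕ):ℂ)) = (z - z₀)^σ * (z - z₀)^(n-k) :=
        hsplit _ hh0 σ (n-k)
      have h3 : (z - z₀)^n = (z - z₀)^k * (z - z₀)^(n-k) := by
        rw [← pow_add]; congr 1; omega
      rw [h1, h2, hP, h3]
      field_simp
    rw [Finset.sum_congr rfl hterm, ← Finset.sum_mul]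
    congr 1
    calc ∑ k ∈ Finset.range (n+1), qc k * c (n-k)
        = ∑ k ∈ Finset.range (n+1), qc (n+1-1-k) * c (n - (n+1-1-k)) :=
          (Finset.sum_range_reflect (fun k => qc k * c (n-k)) (n+1)).symm
      _ = ∑ m ∈ Finset.range (n+1), qc (n-m) * c m := by
          refine Finset.sum_congr rfl fun m hm => ?_
          have hmn : m ≤ n := Nat.lt_succ_iff.mp (Finset.mem_range.mp hm)
          have e1 : n+1-1-m = n - m := by omega
          have e2 : n - (n - m) = m := by omega
          rw [e1, e2]
  have hs2sum : Summable (fun j : ℕ =>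
      c j * ((σ + (j:ℂ)) * ((σ + (j:ℂ) - 1) * (z - z₀) ^ (σ + (j:ℂ) - 2)))) :=
    Summable.of_norm_bounded hu2 (fun j => hbound2 j z hzT)
  have hssum : Summable (fun n : ℕ => ∑ kl ∈ Finset.HasAntidiagonal.antidiagonal n,
      (qc kl.1 * (z - z₀) ^ ((kl.1:ℤ) - 2)) * (c kl.2 * (z - z₀) ^ (σ + (kl.2:ℂ)))) :=
    (summable_norm_sum_mul_antidiagonal_of_summable_norm hfnorm hgnorm).of_norm
  have hs1' : Summable (fun j : ℕ =>
      (c j * ((σ + (j:ℂ)) * (σ + (j:ℂ) - 1))) * (P * (z - z₀)^j)) := hs2sum.congr hg2P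
  have hs2' : Summable (fun n : ℕ =>
      (∑ m ∈ Finset.range (n+1), qc (n - m) * c m) * (P * (z - z₀)^n)) := hssum.congr hanti
  have hsum_n : ∀ n : ℕ, ∑ m ∈ Finset.range n, qc (n-m) * c m
      = indicial s (σ + (n:ℂ)) * c n := by
    intro n
    rcases Nat.eq_zero_or_pos n with rfl | hn
    · simp [hσ0]
    · exact (hrec n hn).symm
  have hzero : ∀ n : ℕ,
      (c n * ((σ + (n:ℂ)) * (σ + (n:ℂ) - 1))) * (P * (z - z₀)^n)
      + (∑ m ∈ Finset.range (n+1), qc (n - m) * c m) * (P * (z - z₀)^n) = 0 := by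
    intro n
    have hkey : (σ+(n:ℂ)) * (σ+(n:ℂ) - 1) + qc 0 + indicial s (σ+(n:ℂ)) = 0 := by
      simp only [indicial, hq0]; ring
    rw [Finset.sum_range_succ, Nat.sub_self, hsum_n n]
    linear_combination (c n * (P * (z - z₀)^n)) * hkey
  rw [hit2, hqzt, hprod]
  calc (∑' j : ℕ, c j * ((σ + (j:ℂ)) * ((σ + (j:ℂ) - 1) * (z - z₀) ^ (σ + (j:ℂ) - 2))))
      + ∑' n : ℕ, ∑ kl ∈ Finset.HasAntidiagonal.antidiagonal n,
        (qc kl.1 * (z - z₀) ^ ((kl.1:ℤ) - 2)) * (c kl.2 * (z - z₀) ^ (σ + (kl.2:ℂ)))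
      = (∑' j : ℕ, (c j * ((σ + (j:ℂ)) * (σ + (j:ℂ) - 1))) * (P * (z - z₀)^j))
        + ∑' n : ℕ, (∑ m ∈ Finset.range (n+1), qc (n - m) * c m) * (P * (z - z₀)^n) := by
        rw [tsum_congr hg2P, tsum_congr hanti]
    _ = ∑' n : ℕ, ((c n * ((σ + (n:ℂ)) * (σ + (n:ℂ) - 1))) * (P * (z - z₀)^n)
        + (∑ m ∈ Finset.range (n+1), qc (n - m) * c m) * (P * (z - z₀)^n)) :=
        (Summable.tsum_add hs1' hs2').symm
    _ = ∑' n : ℕ, (0:ℂ) := tsum_congr hzero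
    _ = 0 := tsum_zero

lemma fseries_analyticAt (c : ℕ → ℂ) (A : ℝ) (hA : 0 < A) (hcA : ∀ j, ‖c j‖ ≤ A ^ j)
    (u : ℂ) (hu : ‖u‖ < 1 / A) :
    AnalyticAt ℂ (fun v : ℂ => ∑' j : ℕ, c j * v ^ j) u := by
  set p := FormalMultilinearSeries.ofScalars ℂ c with hp
  have hrad : ((1/A : ℝ).toNNReal : ENNReal) ≤ p.radius := by
    refine p.le_radius_of_bound 1 fun n => ?_
    have h1 : ‖p n‖ = ‖c n‖ := FormalMultilinearSeries.ofScalars_norm ℂ c n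
    have h2 : ((1/A : ℝ).toNNReal : ℝ) = 1/A := Real.coe_toNNReal _ (by positivity)
    rw [h1, h2]
    calc ‖c n‖ * (1/A) ^ n ≤ A ^ n * (1/A) ^ n :=
          mul_le_mul_of_nonneg_right (hcA n) (by positivity)
      _ = 1 := by rw [← mul_pow]; field_simp; exact one_pow n
  have hradpos : 0 < p.radius := lt_of_lt_of_le (by
    simp only [ENNReal.coe_pos, Real.toNNReal_pos]; positivity) hrad
  have hball := p.hasFPowerSeriesOnBall hradpos
  have hmem : u ∈ Metric.eball (0:ℂ) p.radius := by
    rw [Metric.mem_eball, edist_eq_enorm_sub, sub_zero, enorm_eq_nnnorm]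
    refine lt_of_lt_of_le ?_ hrad
    rw [ENNReal.coe_lt_coe, ← Real.toNNReal_coe (r := ‖u‖₊)]
    exact (Real.toNNReal_lt_toNNReal_iff (by positivity)).2 (by simpa using hu)
  have heq : p.sum = fun v : ℂ => ∑' j : ℕ, c j * v ^ j := by
    funext v
    refine tsum_congr fun n => ?_
    rw [hp, FormalMultilinearSeries.ofScalars_apply_eq, smul_eq_mul]
  rw [← heq]
  exact hball.analyticAt_of_mem hmem

lemma frob_analytic (z₀ σ : ℂ) (c : ℕ → ℂ) (A ρ' : ℝ) (hA : 0 < A) (hcA : ∀ j, ‖c j‖ ≤ A ^ j)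
    (hρ'0 : 0 < ρ') (hρ'A : ρ' ≤ 1/(2*A)) :
    ∀ z : ℂ, z - z₀ ∈ Complex.slitPlane → dist z z₀ < ρ' →
      AnalyticAt ℂ (fun x => ∑' j : ℕ, c j * (x - z₀) ^ (σ + (j:ℂ))) z ∧
      (∑' j : ℕ, c j * (z - z₀) ^ (σ + (j:ℂ)))
        = (z - z₀) ^ σ * ∑' j : ℕ, c j * (z - z₀) ^ j := by
  intro z hslit hdist
  have h2A : 1/(2*A) < 1/A := by
    rw [div_lt_div_iff₀ (by positivity) (by positivity)]
    nlinarith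
  have hEv : ∀ y : ℂ, y - z₀ ∈ Complex.slitPlane → dist y z₀ < ρ' →
      (y - z₀) ^ σ * (∑' j : ℕ, c j * (y - z₀) ^ j)
        = ∑' j : ℕ, c j * (y - z₀) ^ (σ + (j:ℂ)) := by
    intro y hy hyd
    have hy0 : y - z₀ ≠ 0 := Complex.slitPlane_ne_zero hy
    rw [← tsum_mul_left]
    refine tsum_congr fun j => ?_
    rw [cpow_add _ _ hy0, cpow_natCast]
    ring
  have hnorm : ‖z - z₀‖ < 1/A := by
    rw [← dist_eq_norm] at *
    linarith
  have hF : AnalyticAt ℂ (fun v : ℂ => ∑' j : ℕ, c j * v ^ j) (z - z₀) :=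
    fseries_analyticAt c A hA hcA _ (by rwa [← dist_eq_norm] at hnorm ⊢)
  have hsub : AnalyticAt ℂ (fun y : ℂ => y - z₀) z :=
    (analyticAt_id).sub analyticAt_const
  have hcomp : AnalyticAt ℂ (fun y : ℂ => ∑' j : ℕ, c j * (y - z₀) ^ j) z := by
    have hcomp' := AnalyticAt.comp_of_eq hF hsub rfl
    exact hcomp'
  have hcpow : AnalyticAt ℂ (fun y : ℂ => (y - z₀) ^ σ) z :=
    hsub.cpow analyticAt_const hslit
  constructor
  · refine (hcpow.mul hcomp).congr ?_
    have hopen : IsOpen (((fun y : ℂ => y - z₀) ⁻¹' Complex.slitPlane) ∩ Metric.ball z₀ ρ') :=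
      (Complex.isOpen_slitPlane.preimage (continuous_id.sub continuous_const)).inter
        Metric.isOpen_ball
    filter_upwards [hopen.mem_nhds ⟨hslit, Metric.mem_ball.mpr hdist⟩] with y hy
    exact hEv y hy.1 (Metric.mem_ball.mp hy.2)
  · exact (hEv z hslit hdist).symm

/-- **Frobenius solutions, non-integer index difference.** Let
`q(z) = ∑_{j≥0} q_j (z − z₀)^{j−2}` on a punctured disc around `z₀`, with
`q₀ = −s(s+1)`, `Re(2s+1) ≥ 0` and `2s+1 ∉ ℤ`. If `c¹, c²` are the Frobenius
coefficient sequences for the indices `σ = s+1` and `σ = −s`, then the series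
`w(σ,z) = ∑ c_j(σ)(z−z₀)^{σ+j}` converge in a (slit) punctured neighborhood of
`z₀` and give two linearly independent solutions of `y'' + q y = 0` there. -/
theorem frobenius_nonintegral_indices (z₀ s : ℂ)
    (hre : 0 ≤ (2 * s + 1).re)
    (hni : ∀ k : ℤ, (2 * s + 1 : ℂ) ≠ (k : ℂ))
    (q : ℂ → ℂ) (qc : ℕ → ℂ) (hq0 : qc 0 = -(s * (s + 1)))
    (ρ : ℝ) (hρ : 0 < ρ)
    (hq : ∀ z : ℂ, z ≠ z₀ → dist z z₀ < ρ →
      HasSum (fun j : ℕ => qc j * (z - z₀) ^ ((j : ℤ) - 2)) (q z))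
    (c₁ c₂ : ℕ → ℂ)
    (hc₁0 : c₁ 0 = 1)
    (hc₁ : ∀ j : ℕ, 1 ≤ j →
      c₁ j = (∑ m ∈ Finset.range j, qc (j - m) * c₁ m) / indicial s (s + 1 + (j : ℂ)))
    (hc₂0 : c₂ 0 = 1)
    (hc₂ : ∀ j : ℕ, 1 ≤ j →
      c₂ j = (∑ m ∈ Finset.range j, qc (j - m) * c₂ m) / indicial s (-s + (j : ℂ))) :
    ∃ ρ' : ℝ, 0 < ρ' ∧ ρ' ≤ ρ ∧
      ∃ w₁ w₂ : ℂ → ℂ,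
        (∀ z : ℂ, z - z₀ ∈ Complex.slitPlane → dist z z₀ < ρ' →
          -- convergence of the two Frobenius series
          HasSum (fun j : ℕ => c₁ j * (z - z₀) ^ (s + 1 + (j : ℂ))) (w₁ z) ∧
          HasSum (fun j : ℕ => c₂ j * (z - z₀) ^ (-s + (j : ℂ))) (w₂ z) ∧
          -- w₁ and w₂ are solutions of y'' + q y = 0
          AnalyticAt ℂ w₁ z ∧ AnalyticAt ℂ w₂ z ∧
          iteratedDeriv 2 w₁ z + q z * w₁ z = 0 ∧
          iteratedDeriv 2 w₂ z + q z * w₂ z = 0) ∧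
        -- w₁ and w₂ are linearly independent
        (∀ a b : ℂ,
          (∀ z : ℂ, z - z₀ ∈ Complex.slitPlane → dist z z₀ < ρ' →
            a * w₁ z + b * w₂ z = 0) → a = 0 ∧ b = 0) := by
  -- the radius for coefficient bounds
  set r : ℝ := ρ / 2 with hrdef
  have hrpos : 0 < r := by positivity
  -- bound the Laurent coefficients of q
  have hne : z₀ + (r:ℂ) ≠ z₀ := by
    intro H
    have h0 : (r:ℂ) = 0 := by
      have := add_eq_left.mp H
      exact this
    rw [Complex.ofReal_eq_zero] at h0
    linarith
  have hrnorm : ‖(r:ℂ)‖ = r := by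
    rw [Complex.norm_real, Real.norm_eq_abs, abs_of_pos hrpos]
  have hdistr : dist (z₀ + (r:ℂ)) z₀ < ρ := by
    rw [dist_eq_norm, add_sub_cancel_left, hrnorm]; linarith
  obtain ⟨M0, hM0⟩ := exists_norm_le_of_summable _ (hq _ hne hdistr).summable
  set M : ℝ := max 0 (M0 * r^2) with hMdef
  have hM : 0 ≤ M := le_max_left _ _
  have hqcM : ∀ j : ℕ, ‖qc j‖ ≤ M / r ^ j := by
    intro j
    have h0 := hM0 j
    rw [add_sub_cancel_left, norm_mul, norm_zpow, hrnorm] at h0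
    have hz2 : r ^ ((j:ℤ) - 2) = r^j / r^2 := by
      rw [zpow_sub₀ (ne_of_gt hrpos), zpow_natCast,
        show (2:ℤ) = ((2:ℕ):ℤ) by norm_num, zpow_natCast]
    rw [hz2] at h0
    have h2 : ‖qc j‖ ≤ (M0 * r^2) / r^j := by
      rw [le_div_iff₀ (pow_pos hrpos j)]
      calc ‖qc j‖ * r^j = (‖qc j‖ * (r^j/r^2)) * r^2 := by field_simp
        _ ≤ M0 * r^2 := mul_le_mul_of_nonneg_right h0 (by positivity)
    refine h2.trans ?_
    gcongr
    · exact le_max_right _ _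
  -- lower bound for the indicial values
  obtain ⟨δ, hδpos, hδ1, hδ⟩ := delta_bound s hre hni
  have hind₁ : ∀ j : ℕ, 1 ≤ j → δ ≤ ‖indicial s (s + 1 + (j:ℂ))‖ := fun j hj => (hδ j hj).1
  have hind₂ : ∀ j : ℕ, 1 ≤ j → δ ≤ ‖indicial s (-s + (j:ℂ))‖ := fun j hj => (hδ j hj).2
  have hindne₁ : ∀ j : ℕ, 1 ≤ j → indicial s (s + 1 + (j:ℂ)) ≠ 0 := by
    intro j hj H
    have := hind₁ j hj
    rw [H, norm_zero] at this
    linarith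
  have hindne₂ : ∀ j : ℕ, 1 ≤ j → indicial s (-s + (j:ℂ)) ≠ 0 := by
    intro j hj H
    have := hind₂ j hj
    rw [H, norm_zero] at this
    linarith
  have hrec₁ : ∀ j : ℕ, 1 ≤ j →
      indicial s (s + 1 + (j:ℂ)) * c₁ j = ∑ m ∈ Finset.range j, qc (j - m) * c₁ m := by
    intro j hj
    rw [hc₁ j hj, mul_div_cancel₀ _ (hindne₁ j hj)]
  have hrec₂ : ∀ j : ℕ, 1 ≤ j →
      indicial s (-s + (j:ℂ)) * c₂ j = ∑ m ∈ Finset.range j, qc (j - m) * c₂ m := by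
    intro j hj
    rw [hc₂ j hj, mul_div_cancel₀ _ (hindne₂ j hj)]
  have hσ0₁ : indicial s (s + 1) = 0 := by unfold indicial; ring
  have hσ0₂ : indicial s (-s) = 0 := by unfold indicial; ring
  -- geometric bound for the coefficients
  set A : ℝ := (1 + M / δ) / r with hAdef
  have hApos : 0 < A := by
    have h1 : 0 ≤ M / δ := div_nonneg hM hδpos.le
    have h2 : 0 < 1 + M / δ := by linarith
    exact div_pos h2 hrpos
  have hcA₁ : ∀ j, ‖c₁ j‖ ≤ A ^ j := by
    intro j
    rw [hAdef]
    exact frob_coeff_bound s (s+1) qc c₁ r M δ hrpos hM hδpos hqcM hind₁ hc₁0 hc₁ j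
  have hcA₂ : ∀ j, ‖c₂ j‖ ≤ A ^ j := by
    intro j
    rw [hAdef]
    exact frob_coeff_bound s (-s) qc c₂ r M δ hrpos hM hδpos hqcM hind₂ hc₂0 hc₂ j
  -- the radius of the solutions
  set ρ' : ℝ := min (1/(2*A)) (r/2) with hρ'def
  have hρ'pos : 0 < ρ' := lt_min (by positivity) (by positivity)
  have hρ'A : ρ' ≤ 1/(2*A) := min_le_left _ _
  have hρ'r : ρ' ≤ r/2 := min_le_right _ _
  have hρ'ρ : ρ' ≤ ρ := by
    refine hρ'r.trans ?_
    rw [hrdef]; linarith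
  have hrρ : r < ρ := by rw [hrdef]; linarith
  have HP₁ := frob_pointwise z₀ s (s+1) q qc c₁ ρ r M A ρ' hq hq0 hσ0₁ hrec₁ hrpos hrρ hM hqcM
    hApos hcA₁ hρ'pos hρ'A hρ'r
  have HP₂ := frob_pointwise z₀ s (-s) q qc c₂ ρ r M A ρ' hq hq0 hσ0₂ hrec₂ hrpos hrρ hM hqcM
    hApos hcA₂ hρ'pos hρ'A hρ'r
  have HA₁ := frob_analytic z₀ (s+1) c₁ A ρ' hApos hcA₁ hρ'pos hρ'A
  have HA₂ := frob_analytic z₀ (-s) c₂ A ρ' hApos hcA₂ hρ'pos hρ'A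
  refine ⟨ρ', hρ'pos, hρ'ρ,
    (fun x => ∑' j : ℕ, c₁ j * (x - z₀) ^ (s + 1 + (j:ℂ))),
    (fun x => ∑' j : ℕ, c₂ j * (x - z₀) ^ (-s + (j:ℂ))), ?_, ?_⟩
  · intro z hs hd
    exact ⟨(HP₁ z hs hd).1, (HP₂ z hs hd).1, (HA₁ z hs hd).1, (HA₂ z hs hd).1,
      (HP₁ z hs hd).2, (HP₂ z hs hd).2⟩
  · intro a b hab
    set F₁ : ℂ → ℂ := fun u => ∑' j : ℕ, c₁ j * u ^ j with hF₁def
    set F₂ : ℂ → ℂ := fun u => ∑' j : ℕ, c₂ j * u ^ j with hF₂def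
    have hF₁0 : F₁ 0 = 1 := by
      rw [hF₁def]
      simp only
      rw [tsum_eq_single 0 (fun j hj => by simp [zero_pow hj])]
      simp [hc₁0]
    have hF₂0 : F₂ 0 = 1 := by
      rw [hF₂def]
      simp only
      rw [tsum_eq_single 0 (fun j hj => by simp [zero_pow hj])]
      simp [hc₂0]
    have hE : ∀ x : ℝ, 0 < x → x < ρ' →
        a * ((x:ℂ)^(s+1) * F₁ x) + b * ((x:ℂ)^(-s) * F₂ x) = 0 := by
      intro x hx0 hxρ'
      have hsub : (z₀ + (x:ℂ)) - z₀ = (x:ℂ) := add_sub_cancel_left _ _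
      have hslitx : (z₀ + (x:ℂ)) - z₀ ∈ Complex.slitPlane := by
        rw [hsub]; exact Complex.ofReal_mem_slitPlane.2 hx0
      have hdistx : dist (z₀ + (x:ℂ)) z₀ < ρ' := by
        rw [dist_eq_norm, hsub, Complex.norm_real, Real.norm_eq_abs, abs_of_pos hx0]
        exact hxρ'
      have h1 := hab _ hslitx hdistx
      beta_reduce at h1
      have h2 := (HA₁ _ hslitx hdistx).2
      have h3 := (HA₂ _ hslitx hdistx).2
      rw [h2, h3, hsub] at h1
      exact h1
    have hE2 : ∀ x : ℝ, 0 < x → x < ρ' →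
        a * ((x:ℂ)^(2*s+1) * F₁ x) + b * F₂ x = 0 := by
      intro x hx0 hxρ'
      have hx0c : (x:ℂ) ≠ 0 := Complex.ofReal_ne_zero.mpr (ne_of_gt hx0)
      have e1 : (x:ℂ)^(s+1) * (x:ℂ)^s = (x:ℂ)^(2*s+1) := by
        rw [← cpow_add _ _ hx0c]; congr 1; ring
      have e2 : (x:ℂ)^(-s) * (x:ℂ)^s = 1 := by
        rw [← cpow_add _ _ hx0c, neg_add_cancel, cpow_zero]
      have h1 := hE x hx0 hxρ'
      linear_combination (x:ℂ)^s * h1 - (a * F₁ x) * e1 - (b * F₂ x) * e2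
    have hF₁cont : ContinuousAt F₁ 0 :=
      (fseries_analyticAt c₁ A hApos hcA₁ 0 (by rw [norm_zero]; positivity)).continuousAt
    have hF₂cont : ContinuousAt F₂ 0 :=
      (fseries_analyticAt c₂ A hApos hcA₂ 0 (by rw [norm_zero]; positivity)).continuousAt
    have hofReal : Filter.Tendsto (fun x : ℝ => (x:ℂ)) (nhdsWithin 0 (Set.Ioi 0)) (nhds 0) := by
      have h1 : Filter.Tendsto (fun x : ℝ => (x:ℂ)) (nhds (0:ℝ)) (nhds ((0:ℝ):ℂ)) :=
        Complex.continuous_ofReal.continuousAt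
      simpa using h1.mono_left nhdsWithin_le_nhds
    have htF₁ : Filter.Tendsto (fun x : ℝ => F₁ (x:ℂ)) (nhdsWithin 0 (Set.Ioi 0)) (nhds 1) := by
      have := hF₁cont.tendsto.comp hofReal
      rwa [hF₁0] at this
    have htF₂ : Filter.Tendsto (fun x : ℝ => F₂ (x:ℂ)) (nhdsWithin 0 (Set.Ioi 0)) (nhds 1) := by
      have := hF₂cont.tendsto.comp hofReal
      rwa [hF₂0] at this
    have hevρ' : ∀ᶠ x : ℝ in nhdsWithin 0 (Set.Ioi 0), 0 < x ∧ x < ρ' := by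
      filter_upwards [self_mem_nhdsWithin, nhdsWithin_le_nhds (Iio_mem_nhds hρ'pos)] with x h1 h2
      exact ⟨h1, h2⟩
    have ht0 : (2*s+1 : ℂ) ≠ 0 := by simpa using hni 0
    rcases hre.lt_or_eq with hret | hre0
    · -- Re(2s+1) > 0
      have hnormt : Filter.Tendsto (fun x : ℝ => (x:ℂ)^(2*s+1)) (nhdsWithin 0 (Set.Ioi 0))
          (nhds 0) := by
        rw [tendsto_zero_iff_norm_tendsto_zero]
        have hrp : Filter.Tendsto (fun x : ℝ => x ^ (2*s+1).re) (nhdsWithin 0 (Set.Ioi 0))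
            (nhds 0) := by
          have hc := (Real.continuousAt_rpow_const 0 ((2*s+1).re) (Or.inr hret.le)).tendsto
          rw [Real.zero_rpow (ne_of_gt hret)] at hc
          exact hc.mono_left nhdsWithin_le_nhds
        refine hrp.congr' ?_
        filter_upwards [self_mem_nhdsWithin] with x hx
        rw [Complex.norm_cpow_eq_rpow_re_of_pos (Set.mem_Ioi.mp hx)]
      have htotal : Filter.Tendsto (fun x : ℝ => a * ((x:ℂ)^(2*s+1) * F₁ x) + b * F₂ x)
          (nhdsWithin 0 (Set.Ioi 0)) (nhds (a * (0 * 1) + b * 1)) :=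
        ((hnormt.mul htF₁).const_mul a).add (htF₂.const_mul b)
      have hzero : Filter.Tendsto (fun x : ℝ => a * ((x:ℂ)^(2*s+1) * F₁ x) + b * F₂ x)
          (nhdsWithin 0 (Set.Ioi 0)) (nhds 0) := by
        refine Filter.Tendsto.congr' ?_ tendsto_const_nhds
        filter_upwards [hevρ'] with x hx
        exact (hE2 x hx.1 hx.2).symm
      have hb : b = 0 := by
        have := tendsto_nhds_unique htotal hzero
        simpa using this
      have hF₁ne : ∀ᶠ x : ℝ in nhdsWithin 0 (Set.Ioi 0), F₁ (x:ℂ) ≠ 0 :=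
        htF₁.eventually_ne one_ne_zero
      obtain ⟨x, hx1, hx2⟩ := (hevρ'.and hF₁ne).exists
      have h1 := hE2 x hx1.1 hx1.2
      rw [hb] at h1
      have hx0c : (x:ℂ) ≠ 0 := Complex.ofReal_ne_zero.mpr (ne_of_gt hx1.1)
      have hcp : (x:ℂ)^(2*s+1) ≠ 0 := by
        intro H
        exact hx0c ((Complex.cpow_eq_zero_iff _ _).mp H).1
      refine ⟨?_, hb⟩
      have h2 : a * ((x:ℂ)^(2*s+1) * F₁ x) = 0 := by simpa using h1
      rcases mul_eq_zero.mp h2 with h | h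
      · exact h
      · exact absurd h (mul_ne_zero hcp hx2)
    · -- Re(2s+1) = 0
      set τ : ℝ := (2*s+1).im with hτdef
      have hτ : τ ≠ 0 := by
        intro H
        apply ht0
        apply Complex.ext
        · simp [← hre0]
        · simpa [hτdef] using H
      have hτc : (τ:ℂ) ≠ 0 := Complex.ofReal_ne_zero.mpr hτ
      have htI : (2*s+1 : ℂ) = (τ:ℂ) * I := by
        apply Complex.ext
        · simp [← hre0]
        · simp [hτdef]
      have hcpval : ∀ y : ℝ, ((Real.exp (y/τ) : ℝ):ℂ) ^ (2*s+1) = Complex.exp ((y:ℂ) * I) := by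
        intro y
        have hpos : (0:ℝ) < Real.exp (y/τ) := Real.exp_pos _
        have hne0 : ((Real.exp (y/τ) : ℝ):ℂ) ≠ 0 := Complex.ofReal_ne_zero.mpr hpos.ne'
        rw [Complex.cpow_def_of_ne_zero hne0, ← Complex.ofReal_log hpos.le, Real.log_exp, htI]
        congr 1
        push_cast
        field_simp
      set m : ℕ → ℤ := fun n => if 0 < τ then -(n:ℤ) else (n:ℤ) with hm
      have hmτ : ∀ n : ℕ, (2*Real.pi*(m n)) / τ = -((2*Real.pi/|τ|) * n) := by
        intro n
        by_cases h : 0 < τ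
        · rw [hm]; simp only [if_pos h]
          rw [abs_of_pos h]
          push_cast
          field_simp
        · have hτneg : τ < 0 := lt_of_le_of_ne (not_lt.mp h) hτ
          rw [hm]; simp only [if_neg h]
          rw [abs_of_neg hτneg]
          push_cast
          field_simp
      have hdivt : ∀ d : ℝ, Filter.Tendsto (fun n : ℕ => (2*Real.pi*(m n) + d)/τ)
          Filter.atTop Filter.atBot := by
        intro d
        have hpos2π : 0 < 2*Real.pi/|τ| := by positivity
        have h1 : Filter.Tendsto (fun n : ℕ => (2*Real.pi/|τ|) * n) Filter.atTop Filter.atTop :=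
          Filter.Tendsto.const_mul_atTop hpos2π tendsto_natCast_atTop_atTop
        have h2 : Filter.Tendsto (fun n : ℕ => -((2*Real.pi/|τ|) * n)) Filter.atTop
            Filter.atBot := Filter.tendsto_neg_atTop_atBot.comp h1
        have h3 := Filter.tendsto_atBot_add_const_right Filter.atTop (d/τ) h2
        refine h3.congr fun n => ?_
        rw [add_div, hmτ n]
      have hseq : ∀ d : ℝ, Filter.Tendsto (fun n : ℕ => Real.exp ((2*Real.pi*(m n) + d)/τ))
          Filter.atTop (nhdsWithin 0 (Set.Ioi 0)) := by
        intro d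
        refine tendsto_nhdsWithin_of_tendsto_nhds_of_eventually_within _ ?_ ?_
        · exact Real.tendsto_exp_atBot.comp (hdivt d)
        · exact Filter.Eventually.of_forall fun n => Real.exp_pos _
      have hval1 : ∀ n : ℕ, ((Real.exp ((2*Real.pi*(m n) + 0)/τ) : ℝ):ℂ) ^ (2*s+1) = 1 := by
        intro n
        rw [hcpval]
        have he : ((2*Real.pi*(m n) + 0 : ℝ):ℂ) * I = (m n : ℂ) * (2*Real.pi*I) := by
          push_cast; ring
        rw [he, Complex.exp_int_mul_two_pi_mul_I]
      have hval2 : ∀ n : ℕ, ((Real.exp ((2*Real.pi*(m n) + Real.pi)/τ) : ℝ):ℂ) ^ (2*s+1)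
          = -1 := by
        intro n
        rw [hcpval]
        have he : ((2*Real.pi*(m n) + Real.pi : ℝ):ℂ) * I
            = (m n : ℂ) * (2*Real.pi*I) + Real.pi * I := by
          push_cast; ring
        rw [he, Complex.exp_add, Complex.exp_int_mul_two_pi_mul_I, Complex.exp_pi_mul_I]
        ring
      have hlim : ∀ (d : ℝ) (v : ℂ),
          (∀ n : ℕ, ((Real.exp ((2*Real.pi*(m n) + d)/τ) : ℝ):ℂ) ^ (2*s+1) = v) →
          a * v + b = 0 := by
        intro d v hv
        set u : ℕ → ℝ := fun n => Real.exp ((2*Real.pi*(m n) + d)/τ) with hu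
        have h1 : Filter.Tendsto (fun n => a * (v * F₁ (u n)) + b * F₂ (u n)) Filter.atTop
            (nhds (a * (v * 1) + b * 1)) := by
          refine Filter.Tendsto.add ?_ ?_
          · exact (Filter.Tendsto.const_mul v (htF₁.comp (hseq d))).const_mul a
          · exact (htF₂.comp (hseq d)).const_mul b
        have h2 : Filter.Tendsto (fun n => a * (v * F₁ (u n)) + b * F₂ (u n)) Filter.atTop
            (nhds 0) := by
          refine Filter.Tendsto.congr' ?_ tendsto_const_nhds
          filter_upwards [(hseq d).eventually hevρ'] with n hn
          have h3 := hE2 (u n) hn.1 hn.2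
          rw [hv n] at h3
          exact h3.symm
        have := tendsto_nhds_unique h1 h2
        simpa using this
      have h1 := hlim 0 1 hval1
      have h2 := hlim Real.pi (-1) hval2
      constructor
      · linear_combination (h1 - h2) / 2
      · linear_combination (h1 + h2) / 2
end

section
/- Criterion for the inverse-square potential: Let c ∈ ℂ. The differential equation ψ''(z) − c z^{−2} ψ(z) = E ψ(z) on ℂ∖{0} has, for every E ∈ ℂ, a fundamental system of solutions each of which is meromorphic on all of ℂ, if and only if c is of the special form c = s(s+1) for some nonnegative integer s. -/
open Complex Polynomial Filter Set Topology

noncomputable section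
namespace InvSq



/-- Derivative of `exp(kz) * (P(z) * z^m)`. -/
lemma helper (k : ℂ) (P : Polynomial ℂ) (m : ℤ) {w : ℂ} (hw : w ≠ 0) :
    HasDerivAt (fun z : ℂ => Complex.exp (k*z) * (P.eval z * z^m))
      (Complex.exp (k*w) * (((C k * P + derivative P).eval w) * w^m
        + ((C (m:ℂ) * P).eval w) * w^(m-1))) w := by
  have h1 : HasDerivAt (fun z : ℂ => Complex.exp (k*z)) (Complex.exp (k*w) * k) w := by
    simpa using ((hasDerivAt_id w).const_mul k).cexp
  have h2 : HasDerivAt (fun z : ℂ => P.eval z * z^m)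
      (P.derivative.eval w * w^m + P.eval w * ((m:ℂ) * w^(m-1))) w :=
    (P.hasDerivAt w).mul (hasDerivAt_zpow m w (Or.inl hw))
  have h3 := h1.mul h2
  refine h3.congr_deriv ?_
  simp only [eval_add, eval_mul, eval_C]
  ring

/-- second derivative of `y = exp(kz) * (Q(z) * z^m)` at a point `z ≠ 0`. -/
lemma secondDeriv (k : ℂ) (Q : Polynomial ℂ) (m : ℤ) {z : ℂ} (hz : z ≠ 0) :
    iteratedDeriv 2 (fun z : ℂ => Complex.exp (k*z) * (Q.eval z * z^m)) z
      = Complex.exp (k*z) * (((C k * (C k * Q + derivative Q)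
            + derivative (C k * Q + derivative Q)).eval z) * z^m
          + ((C (m:ℂ) * (C k * Q + derivative Q)).eval z) * z^(m-1))
        + Complex.exp (k*z) * (((C k * (C (m:ℂ) * Q) + derivative (C (m:ℂ) * Q)).eval z) * z^(m-1)
          + ((C ((m:ℂ)-1) * (C (m:ℂ) * Q)).eval z) * z^(m-1-1)) := by
  set A := C k * Q + derivative Q with hA
  set B := C (m:ℂ) * Q with hB
  set d1 : ℂ → ℂ := fun w => Complex.exp (k*w) * (A.eval w * w^m)
    + Complex.exp (k*w) * (B.eval w * w^(m-1)) with hd1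
  have hder1 : ∀ w : ℂ, w ≠ 0 → HasDerivAt
      (fun z : ℂ => Complex.exp (k*z) * (Q.eval z * z^m)) (d1 w) w := by
    intro w hw
    have h := helper k Q m hw
    convert h using 1
    simp only [hd1, hA, hB]
    ring
  have hder2 : HasDerivAt d1
      (Complex.exp (k*z) * (((C k * A + derivative A).eval z) * z^m
        + ((C (m:ℂ) * A).eval z) * z^(m-1))
      + Complex.exp (k*z) * (((C k * B + derivative B).eval z) * z^(m-1)
        + ((C ((m:ℂ)-1) * B).eval z) * z^(m-1-1))) z := by
    have h1 := helper k A m hz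
    have h2 := helper k B (m-1) hz
    have := h1.add h2
    refine this.congr_deriv ?_
    push_cast
    ring
  have hev : deriv (fun z : ℂ => Complex.exp (k*z) * (Q.eval z * z^m)) =ᶠ[𝓝 z] d1 := by
    filter_upwards [isOpen_compl_singleton.mem_nhds (by simpa using hz)] with w hw
    exact (hder1 w (by simpa using hw)).deriv
  rw [show (2:ℕ) = 1 + 1 from rfl, iteratedDeriv_succ, iteratedDeriv_one]
  rw [hev.deriv_eq, hder2.deriv]


lemma ode (c k : ℂ) (m : ℤ) (Q : Polynomial ℂ)
    (hQ : X^2 * derivative (derivative Q) + (C (2*k) * X^2 + C (2*(m:ℂ)) * X) * derivative Q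
        + (C ((m:ℂ)*((m:ℂ)-1) - c) + C (2*k*(m:ℂ)) * X) * Q = 0)
    {z : ℂ} (hz : z ≠ 0) :
    iteratedDeriv 2 (fun z : ℂ => Complex.exp (k*z) * (Q.eval z * z^m)) z
      - c / z^2 * (Complex.exp (k*z) * (Q.eval z * z^m))
      = k^2 * (Complex.exp (k*z) * (Q.eval z * z^m)) := by
  rw [secondDeriv k Q m hz]
  have hQz := congrArg (Polynomial.eval z) hQ
  simp only [eval_add, eval_mul, eval_pow, eval_C, eval_X, eval_zero] at hQz
  set u : ℂ := z^(m-1-1) with hu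
  have e1 : z^m = u * z * z := by
    rw [hu, show m = m-1-1+1+1 by ring, zpow_add₀ hz, zpow_add₀ hz, zpow_one, show m-1-1+1+1-1-1 = m-1-1 by ring]
  have e2 : z^(m-1) = u * z := by
    rw [hu, show m-1 = m-1-1+1 by ring, zpow_add₀ hz, zpow_one, show m-1-1+1-1 = m-1-1 by ring]
  simp only [derivative_add, derivative_mul, derivative_C, eval_add, eval_mul, eval_C,
    zero_mul, zero_add, e1, e2]
  have h2 : (z:ℂ)^2 ≠ 0 := pow_ne_zero _ hz
  field_simp
  linear_combination u * hQz



/-- coefficients of the polynomial factor. -/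
def bc (s : ℕ) (k : ℂ) : ℕ → ℂ
  | 0 => 1
  | j+1 => (2*k*((s:ℂ)-(j:ℂ))) / (((j:ℂ)+1)*((j:ℂ)-2*(s:ℂ))) * bc s k j

def Qp (s : ℕ) (k : ℂ) : Polynomial ℂ := ∑ j ∈ Finset.range (s+1), C (bc s k j) * X^j

lemma b_zero_of_gt (s : ℕ) (k : ℂ) : ∀ j, s < j → bc s k j = 0 := by
  intro j hj
  induction j with
  | zero => omega
  | succ n ih =>
    rcases Nat.lt_or_ge s n with h | h
    · rw [bc, ih h, mul_zero]
    · have : n = s := by omega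
      subst this
      rw [bc]
      simp

lemma coeff_Qp (s : ℕ) (k : ℂ) (i : ℕ) : (Qp s k).coeff i = bc s k i := by
  rw [Qp, finset_sum_coeff]
  simp only [coeff_C_mul, coeff_X_pow, mul_ite, mul_one, mul_zero]
  rw [Finset.sum_ite_eq (Finset.range (s+1)) i (fun j => bc s k j)]
  by_cases h : i ∈ Finset.range (s+1)
  · rw [if_pos h]
  · rw [if_neg h, eq_comm, b_zero_of_gt]
    simpa using h

lemma rec_id (s : ℕ) (k : ℂ) (j : ℕ) :
    ((j:ℂ)+1) * ((j:ℂ) - 2*(s:ℂ)) * bc s k (j+1) = 2*k*((s:ℂ) - (j:ℂ)) * bc s k j := by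
  by_cases hden : ((j:ℂ) - 2*(s:ℂ)) = 0
  · have hj : j = 2*s := by
      have : (j:ℂ) = ((2*s : ℕ):ℂ) := by push_cast; linear_combination hden
      exact_mod_cast this
    rcases Nat.eq_zero_or_pos s with hs | hs
    · subst hs
      simp at hj
      subst hj
      simp [bc]
    · have hbz : bc s k j = 0 := b_zero_of_gt s k j (by omega)
      rw [hbz, hden]
      ring
  · have h1 : ((j:ℂ)+1) ≠ 0 := by
      have : ((j+1 : ℕ):ℂ) ≠ 0 := Nat.cast_ne_zero.mpr (by omega)
      push_cast at this
      exact this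
    rw [bc]
    field_simp

lemma ident (s : ℕ) (k : ℂ) :
    X * derivative (derivative (Qp s k))
      + (C (2*k) * X - C (2*(s:ℂ))) * derivative (Qp s k)
      - C (2*k*(s:ℂ)) * (Qp s k) = 0 := by
  have e : X * derivative (derivative (Qp s k))
      + (C (2*k) * X - C (2*(s:ℂ))) * derivative (Qp s k) - C (2*k*(s:ℂ)) * (Qp s k)
      = X * derivative (derivative (Qp s k)) + C (2*k) * (X * derivative (Qp s k))
        - C (2*(s:ℂ)) * derivative (Qp s k) - C (2*k*(s:ℂ)) * (Qp s k) := by ring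
  rw [e]
  apply Polynomial.ext
  intro n
  cases n with
  | zero =>
    simp only [coeff_add, coeff_sub, coeff_C_mul, mul_coeff_zero, coeff_X_zero, zero_mul,
      mul_zero, coeff_derivative, coeff_Qp, coeff_zero, coeff_C_zero]
    have h0 := rec_id s k 0
    push_cast at h0
    linear_combination h0
  | succ n =>
    simp only [coeff_add, coeff_sub, coeff_C_mul, coeff_X_mul, coeff_derivative, coeff_Qp,
      coeff_zero]
    have h1 := rec_id s k (n+1)
    push_cast at h1 ⊢
    linear_combination h1



lemma analytic_y (k : ℂ) (Q : Polynomial ℂ) (m : ℤ) {z : ℂ} (hz : z ≠ 0) :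
    AnalyticAt ℂ (fun z : ℂ => Complex.exp (k*z) * (Q.eval z * z^m)) z := by
  apply DifferentiableOn.analyticAt (s := {(0:ℂ)}ᶜ)
  · intro w hw
    exact ((helper k Q m (by simpa using hw)).differentiableAt).differentiableWithinAt
  · exact isOpen_compl_singleton.mem_nhds (by simpa using hz)

lemma mero_y (k : ℂ) (Q : Polynomial ℂ) (m : ℤ) :
    MeromorphicOn (fun z : ℂ => Complex.exp (k*z) * (Q.eval z * z^m)) Set.univ := by
  intro x _
  have h1 : MeromorphicAt (fun z : ℂ => Complex.exp (k*z)) x := by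
    apply AnalyticAt.meromorphicAt
    apply Differentiable.analyticAt
    exact (differentiable_const k |>.mul differentiable_id).cexp
  have h2 : MeromorphicAt (fun z : ℂ => Q.eval z) x :=
    (Q.differentiable.analyticAt x).meromorphicAt
  have h3 : MeromorphicAt (fun z : ℂ => z^m) x := by
    have := (MeromorphicAt.id x).zpow m
    exact this
  exact h1.mul (h2.mul h3)

lemma ident_neg (s : ℕ) (k : ℂ) (Q : Polynomial ℂ)
    (h : X * derivative (derivative Q) + (C (2*k) * X - C (2*(s:ℂ))) * derivative Q
      - C (2*k*(s:ℂ)) * Q = 0) :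
    X * derivative (derivative (C ((-1:ℂ)^s) * Q.comp (-X)))
      + (C (2*(-k)) * X - C (2*(s:ℂ))) * derivative (C ((-1:ℂ)^s) * Q.comp (-X))
      - C (2*(-k)*(s:ℂ)) * (C ((-1:ℂ)^s) * Q.comp (-X)) = 0 := by
  have hc := congrArg (fun p : Polynomial ℂ => p.comp (-X)) h
  simp only [add_comp, sub_comp, mul_comp, X_comp, C_comp, zero_comp] at hc
  have hd : ∀ P : Polynomial ℂ, derivative (P.comp (-X)) = -(derivative P).comp (-X) := by
    intro P
    rw [derivative_comp]
    simp
  rw [derivative_C_mul, derivative_C_mul, hd Q, derivative_neg, hd (derivative Q)]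
  simp only [derivative_neg, neg_neg]
  simp only [mul_neg, neg_mul, map_neg]
  linear_combination (-(C ((-1:ℂ)^s))) * hc

lemma b_ne_zero (s : ℕ) (k : ℂ) (hk : k ≠ 0) : ∀ j, j ≤ s → bc s k j ≠ 0 := by
  intro j hj
  induction j with
  | zero => rw [bc]; exact one_ne_zero
  | succ n ih =>
    rw [bc]
    apply mul_ne_zero _ (ih (by omega))
    apply div_ne_zero
    · apply mul_ne_zero (mul_ne_zero two_ne_zero hk)
      have : ((s - n : ℕ) : ℂ) ≠ 0 := Nat.cast_ne_zero.mpr (by omega)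
      rw [Nat.cast_sub (by omega : n ≤ s)] at this
      exact this
    · apply mul_ne_zero
      · have : ((n+1 : ℕ) : ℂ) ≠ 0 := Nat.cast_ne_zero.mpr (by omega)
        push_cast at this
        exact this
      · intro hcon
        have : (n : ℂ) = ((2*s : ℕ) : ℂ) := by push_cast; linear_combination hcon
        have := Nat.cast_inj (R := ℂ) |>.mp this
        omega




lemma tendsto_eval_zpow (P : Polynomial ℂ) (s : ℕ) (hdeg : P.natDegree < s+1) (w : ℂ)
    (hw : w ≠ 0) :
    Tendsto (fun t : ℝ => P.eval ((t:ℂ)*w) * ((((t:ℂ)*w))^s)⁻¹) atTop (𝓝 (P.coeff s)) := by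
  have hev : ∀ᶠ t : ℝ in atTop, P.eval ((t:ℂ)*w) * ((((t:ℂ)*w))^s)⁻¹
      = ∑ i ∈ Finset.range (s+1), P.coeff i * (w^(s-i))⁻¹ * (((t:ℂ))^(s-i))⁻¹ := by
    filter_upwards [eventually_gt_atTop 0] with t ht
    have ht0 : (t:ℂ) ≠ 0 := by exact_mod_cast ne_of_gt ht
    have hz : (t:ℂ)*w ≠ 0 := mul_ne_zero ht0 hw
    rw [Polynomial.eval_eq_sum_range' hdeg, Finset.sum_mul]
    apply Finset.sum_congr rfl
    intro i hi
    have his : i ≤ s := by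
      simp only [Finset.mem_range, Nat.lt_succ_iff] at hi
      exact hi
    have e : ((t:ℂ)*w)^i * (((t:ℂ))^(s-i) * w^(s-i)) = ((t:ℂ)*w)^s := by
      rw [← mul_pow, ← pow_add]
      congr 1
      omega
    field_simp
    linear_combination (P.coeff i) * e
  rw [tendsto_congr' hev]
  have hsum : P.coeff s = ∑ i ∈ Finset.range (s+1),
      (if i = s then P.coeff s else 0) := by
    rw [Finset.sum_ite_eq' (Finset.range (s+1)) s (fun _ => P.coeff s)]
    simp
  rw [hsum]
  apply tendsto_finset_sum
  intro i hi
  have his : i ≤ s := by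
    simp only [Finset.mem_range, Nat.lt_succ_iff] at hi
    exact hi
  rcases eq_or_lt_of_le his with he | hlt
  · subst he
    simp only [if_pos rfl, Nat.sub_self, pow_zero, inv_one, mul_one]
    exact tendsto_const_nhds
  · rw [if_neg (by omega)]
    have h1 : Tendsto (fun t : ℝ => ((t:ℂ))⁻¹) atTop (𝓝 0) := by
      have h0 := tendsto_inv_atTop_zero (𝕜 := ℝ)
      have := (Complex.continuous_ofReal.tendsto 0).comp h0
      apply this.congr
      intro t
      simp [Function.comp, Complex.ofReal_inv]
    have h2 : Tendsto (fun t : ℝ => (((t:ℂ))^(s-i))⁻¹) atTop (𝓝 0) := by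
      have := h1.pow (s-i)
      rw [zero_pow (by omega : s - i ≠ 0)] at this
      simpa [inv_pow] using this
    have := h2.const_mul (P.coeff i * (w^(s-i))⁻¹)
    simpa [mul_assoc] using this




lemma natDegree_Qp (s : ℕ) (k : ℂ) : (Qp s k).natDegree ≤ s := by
  apply Polynomial.natDegree_sum_le_of_forall_le
  intro i hi
  refine le_trans (natDegree_C_mul_le _ _) ?_
  rw [natDegree_X_pow]
  exact Nat.lt_succ_iff.mp (Finset.mem_range.mp hi)

lemma reverse (c : ℂ) (s : ℕ) (hc : c = (s:ℂ) * ((s:ℂ)+1)) (E : ℂ) :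
    ∃ y₁ y₂ : ℂ → ℂ, MeromorphicOn y₁ Set.univ ∧ MeromorphicOn y₂ Set.univ ∧
      (∀ z : ℂ, z ≠ 0 → AnalyticAt ℂ y₁ z →
        iteratedDeriv 2 y₁ z - c / z ^ 2 * y₁ z = E * y₁ z) ∧
      (∀ z : ℂ, z ≠ 0 → AnalyticAt ℂ y₂ z →
        iteratedDeriv 2 y₂ z - c / z ^ 2 * y₂ z = E * y₂ z) ∧
      (∀ a b : ℂ, (∀ z : ℂ, z ≠ 0 → AnalyticAt ℂ y₁ z → AnalyticAt ℂ y₂ z →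
          a * y₁ z + b * y₂ z = 0) → a = 0 ∧ b = 0) := by
  by_cases hE : E = 0
  · -- Euler case : pure powers
    have hQ1 : X^2 * derivative (derivative (1:Polynomial ℂ))
        + (C (2*(0:ℂ)) * X^2 + C (2*((((s:ℤ)+1):ℤ):ℂ)) * X) * derivative (1:Polynomial ℂ)
        + (C ((((((s:ℤ)+1):ℤ)):ℂ)*(((((s:ℤ)+1):ℤ):ℂ)-1) - c)
            + C (2*(0:ℂ)*((((s:ℤ)+1):ℤ):ℂ)) * X) * (1:Polynomial ℂ) = 0 := by
      rw [hc]
      push_cast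
      simp only [derivative_one, mul_zero, zero_mul, add_zero, zero_add, mul_one, map_sub,
        map_add, map_mul, map_one, map_ofNat, map_zero]
      ring
    have hQ2 : X^2 * derivative (derivative (1:Polynomial ℂ))
        + (C (2*(0:ℂ)) * X^2 + C (2*(((-(s:ℤ)):ℤ):ℂ)) * X) * derivative (1:Polynomial ℂ)
        + (C ((((-(s:ℤ)):ℤ):ℂ)*((((-(s:ℤ)):ℤ):ℂ)-1) - c)
            + C (2*(0:ℂ)*(((-(s:ℤ)):ℤ):ℂ)) * X) * (1:Polynomial ℂ) = 0 := by
      rw [hc]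
      push_cast
      simp only [derivative_one, mul_zero, zero_mul, add_zero, zero_add, mul_one, map_sub,
        map_add, map_mul, map_one, map_ofNat, map_zero, map_neg]
      ring
    refine ⟨fun z => Complex.exp ((0:ℂ)*z) * ((1:Polynomial ℂ).eval z * z^((s:ℤ)+1)),
        fun z => Complex.exp ((0:ℂ)*z) * ((1:Polynomial ℂ).eval z * z^(-(s:ℤ))),
        mero_y 0 1 _, mero_y 0 1 _, ?_, ?_, ?_⟩
    · intro z hz _
      have := ode c 0 ((s:ℤ)+1) 1 hQ1 hz
      rw [hE]
      simpa using this
    · intro z hz _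
      have := ode c 0 (-(s:ℤ)) 1 hQ2 hz
      rw [hE]
      simpa using this
    · intro a b hab
      have h1 := hab 1 one_ne_zero (analytic_y 0 1 _ one_ne_zero) (analytic_y 0 1 _ one_ne_zero)
      have h2 := hab 2 two_ne_zero (analytic_y 0 1 _ two_ne_zero) (analytic_y 0 1 _ two_ne_zero)
      simp only [Complex.exp_zero, mul_zero, zero_mul, Complex.exp_zero, eval_one, one_mul,
        one_zpow, mul_one] at h1 h2
      have hne : ((2:ℂ))^((s:ℤ)+1) ≠ (2:ℂ)^(-(s:ℤ)) := by
        intro hcon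
        have h2z : (2:ℂ) ≠ 0 := two_ne_zero
        have he1 : (2:ℂ)^(2*(s:ℤ)+1) = 1 := by
          rw [show 2*(s:ℤ)+1 = ((s:ℤ)+1) + (s:ℤ) by ring, zpow_add₀ h2z, hcon,
            ← zpow_add₀ h2z]
          simp
        rw [show (2*(s:ℤ)+1) = ((2*s+1 : ℕ) : ℤ) by push_cast; ring, zpow_natCast] at he1
        have he2 : ((2^(2*s+1) : ℕ) : ℂ) = ((1:ℕ):ℂ) := by push_cast; exact he1
        have := Nat.cast_injective (R := ℂ) he2
        have h21 : 1 < 2^(2*s+1) := Nat.one_lt_two_pow (by omega)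
        omega
      have ha : a = 0 := by
        have h3 : a * ((2:ℂ)^((s:ℤ)+1) - (2:ℂ)^(-(s:ℤ))) = 0 := by linear_combination h2 - (2:ℂ)^(-(s:ℤ)) * h1
        rcases mul_eq_zero.mp h3 with h | h
        · exact h
        · exact absurd (sub_eq_zero.mp h) hne
      refine ⟨ha, ?_⟩
      rw [ha, zero_add] at h1
      exact h1
  · obtain ⟨k, hk2⟩ := IsAlgClosed.exists_pow_nat_eq E (n := 2) (by norm_num)
    have hk0 : k ≠ 0 := by
      intro h
      apply hE
      rw [← hk2, h]
      ring
    have hident := ident s k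
    have hident2 := ident_neg s k (Qp s k) hident
    set Q2 : Polynomial ℂ := C ((-1:ℂ)^s) * (Qp s k).comp (-X) with hQ2def
    have hQ1 : X^2 * derivative (derivative (Qp s k))
        + (C (2*k) * X^2 + C (2*(((-(s:ℤ)):ℤ):ℂ)) * X) * derivative (Qp s k)
        + (C (((((-(s:ℤ)):ℤ)):ℂ)*((((-(s:ℤ)):ℤ):ℂ)-1) - c)
            + C (2*k*(((-(s:ℤ)):ℤ):ℂ)) * X) * (Qp s k) = 0 := by
      rw [hc]
      push_cast
      simp only [map_sub, map_add, map_mul, map_one, map_ofNat, map_zero, map_neg] at hident ⊢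
      linear_combination X * hident
    have hQ2 : X^2 * derivative (derivative Q2)
        + (C (2*(-k)) * X^2 + C (2*(((-(s:ℤ)):ℤ):ℂ)) * X) * derivative Q2
        + (C (((((-(s:ℤ)):ℤ)):ℂ)*((((-(s:ℤ)):ℤ):ℂ)-1) - c)
            + C (2*(-k)*(((-(s:ℤ)):ℤ):ℂ)) * X) * Q2 = 0 := by
      rw [hc]
      push_cast
      simp only [map_sub, map_add, map_mul, map_one, map_ofNat, map_zero, map_neg] at hident2 ⊢
      linear_combination X * hident2
    refine ⟨fun z => Complex.exp (k*z) * ((Qp s k).eval z * z^(-(s:ℤ))),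
        fun z => Complex.exp ((-k)*z) * (Q2.eval z * z^(-(s:ℤ))),
        mero_y _ _ _, mero_y _ _ _, ?_, ?_, ?_⟩
    · intro z hz _
      have h := ode c k (-(s:ℤ)) (Qp s k) hQ1 hz
      rw [← hk2]
      exact h
    · intro z hz _
      have h := ode c (-k) (-(s:ℤ)) Q2 hQ2 hz
      rw [neg_sq] at h
      rw [← hk2]
      exact h
    · intro a b hab
      have key : ∀ z : ℂ, z ≠ 0 →
          a * ((Qp s k).eval z * ((z^s)⁻¹:ℂ))
            + b * (Complex.exp (-(2*(k*z))) * (Q2.eval z * ((z^s)⁻¹:ℂ))) = 0 := by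
        intro z hz
        have h := hab z hz (analytic_y _ _ _ hz) (analytic_y _ _ _ hz)
        beta_reduce at h
        rw [show z^(-(s:ℤ)) = ((z^s)⁻¹:ℂ) from by rw [zpow_neg, zpow_natCast]] at h
        have he : Complex.exp (k*z) ≠ 0 := Complex.exp_ne_zero _
        have hzs : (z^s : ℂ) ≠ 0 := pow_ne_zero _ hz
        have e2 : Complex.exp (-(2*(k*z))) = (Complex.exp (k*z))⁻¹ * (Complex.exp (k*z))⁻¹ := by
          rw [← Complex.exp_neg, ← Complex.exp_add]
          congr 1
          ring
        have e3 : Complex.exp ((-k)*z) = (Complex.exp (k*z))⁻¹ := by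
          rw [← Complex.exp_neg]
          congr 1
          ring
        rw [e3] at h
        rw [e2]
        field_simp at h ⊢
        linear_combination h
      set w : ℂ := (starRingEnd ℂ) k with hwdef
      have hw : w ≠ 0 := by
        rw [hwdef]
        simpa using hk0
      have hν : 0 < Complex.normSq k := Complex.normSq_pos.mpr hk0
      have T1 : Tendsto (fun t : ℝ => (Qp s k).eval ((t:ℂ)*w)
          * ((((t:ℂ)*w))^s)⁻¹) atTop (𝓝 ((Qp s k).coeff s)) :=
        tendsto_eval_zpow _ s (Nat.lt_succ_of_le (natDegree_Qp s k)) _ hw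
      have hdeg2 : Q2.natDegree < s + 1 := by
        apply Nat.lt_succ_of_le
        refine le_trans (natDegree_C_mul_le _ _) (le_trans natDegree_comp_le ?_)
        rw [natDegree_neg, natDegree_X, mul_one]
        exact natDegree_Qp s k
      have T3 : Tendsto (fun t : ℝ => Q2.eval ((t:ℂ)*w)
          * ((((t:ℂ)*w))^s)⁻¹) atTop (𝓝 (Q2.coeff s)) :=
        tendsto_eval_zpow _ s hdeg2 _ hw
      have T2 : Tendsto (fun t : ℝ => Complex.exp (-(2*(k*((t:ℂ)*w)))))
          atTop (𝓝 0) := by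
        have heq : ∀ t : ℝ, Complex.exp (-(2*(k*((t:ℂ)*w))))
            = ((Real.exp ((-2*Complex.normSq k)*t) : ℝ) : ℂ) := by
          intro t
          rw [Complex.ofReal_exp]
          congr 1
          have hmc := Complex.mul_conj k
          rw [hwdef]
          push_cast
          linear_combination (-2*(t:ℂ)) * hmc
        have hreal : Tendsto (fun t : ℝ => Real.exp ((-2*Complex.normSq k)*t)) atTop (𝓝 0) := by
          rw [Real.tendsto_exp_comp_nhds_zero]
          have h1 : Tendsto (fun t : ℝ => (2*Complex.normSq k)*t) atTop atTop :=
            Tendsto.const_mul_atTop (by positivity) tendsto_id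
          have h2 := tendsto_neg_atTop_atBot.comp h1
          apply h2.congr
          intro t
          simp only [Function.comp]
          ring
        have h3 := (Complex.continuous_ofReal.tendsto 0).comp hreal
        simp only [Complex.ofReal_zero] at h3
        exact Tendsto.congr (fun t => (heq t).symm) h3
      set G : ℝ → ℂ := fun t =>
          a * ((Qp s k).eval ((t:ℂ)*w) * ((((t:ℂ)*w))^s)⁻¹)
          + b * (Complex.exp (-(2*(k*((t:ℂ)*w)))) * (Q2.eval ((t:ℂ)*w) * ((((t:ℂ)*w))^s)⁻¹))
        with hGdef
      have Tall : Tendsto G atTop (𝓝 (a * (Qp s k).coeff s + b * (0 * Q2.coeff s))) :=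
        (T1.const_mul a).add ((T2.mul T3).const_mul b)
      have hev0 : ∀ᶠ t : ℝ in atTop, G t = 0 := by
        filter_upwards [eventually_gt_atTop 0] with t ht
        exact key _ (mul_ne_zero (by exact_mod_cast ne_of_gt ht) hw)
      have hlim := tendsto_nhds_unique ((tendsto_congr' hev0).mp Tall) tendsto_const_nhds
      have hcoeff : (Qp s k).coeff s ≠ 0 := by
        rw [coeff_Qp]
        exact b_ne_zero s k hk0 s le_rfl
      have ha : a = 0 := by
        have h4 : a * (Qp s k).coeff s = 0 := by linear_combination hlim
        rcases mul_eq_zero.mp h4 with h | h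
        exacts [h, absurd h hcoeff]
      refine ⟨ha, ?_⟩
      have hpoly : C b * Q2 = 0 := by
        apply Polynomial.eq_zero_of_infinite_isRoot
        refine Set.Infinite.mono ?_ ((Set.finite_singleton (0:ℂ)).infinite_compl)
        intro z hz
        have hz0 : z ≠ 0 := by simpa using hz
        have h := key z hz0
        rw [ha, zero_mul, zero_add] at h
        have hexp : Complex.exp (-(2*(k*z))) ≠ 0 := Complex.exp_ne_zero _
        have hzs : (z^s : ℂ) ≠ 0 := pow_ne_zero _ hz0
        have hbq : b * Q2.eval z = 0 := by
          have h3 : b * Q2.eval z * (Complex.exp (-(2*(k*z))) * ((z^s)⁻¹:ℂ)) = 0 := by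
            linear_combination h
          have h4 : (Complex.exp (-(2*(k*z))) * ((z^s)⁻¹:ℂ)) ≠ 0 :=
            mul_ne_zero hexp (inv_ne_zero hzs)
          exact (mul_eq_zero.mp h3).resolve_right h4
        simp only [Set.mem_setOf_eq, IsRoot, eval_mul, eval_C]
        exact hbq
      have he0 : Q2.eval 0 = (-1:ℂ)^s := by
        rw [hQ2def]
        simp only [eval_mul, eval_C, eval_comp, eval_neg, eval_X, neg_zero]
        rw [← Polynomial.coeff_zero_eq_eval_zero, coeff_Qp]
        rw [show bc s k 0 = 1 from rfl, mul_one]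
      have hb0 := congrArg (Polynomial.eval 0) hpoly
      simp only [eval_mul, eval_C, eval_zero, he0] at hb0
      have hne : ((-1:ℂ))^s ≠ 0 := pow_ne_zero _ (by norm_num)
      rcases mul_eq_zero.mp hb0 with h | h
      exacts [h, absurd h hne]

lemma countable_nonanalytic {f : ℂ → ℂ} (hf : MeromorphicOn f Set.univ) :
    {z : ℂ | ¬ AnalyticAt ℂ f z}.Countable := by
  set S := {z : ℂ | ¬ AnalyticAt ℂ f z} with hS
  have hclosed : IsClosed S := by
    rw [hS, show {z : ℂ | ¬ AnalyticAt ℂ f z} = {z : ℂ | AnalyticAt ℂ f z}ᶜ from rfl]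
    exact (isOpen_analyticAt ℂ f).isClosed_compl
  have hcov : S = ⋃ m : ℕ, S ∩ Metric.closedBall 0 m := by
    ext z
    simp only [Set.mem_iUnion, Set.mem_inter_iff, Metric.mem_closedBall]
    constructor
    · intro hz
      obtain ⟨m, hm⟩ := exists_nat_ge (dist z 0)
      exact ⟨m, hz, hm⟩
    · rintro ⟨m, hm, -⟩
      exact hm
  rw [hcov]
  apply Set.countable_iUnion
  intro m
  apply Set.Finite.countable
  apply IsCompact.finite ((isCompact_closedBall (0:ℂ) m).inter_left hclosed)
  rw [isDiscrete_iff_nhdsNE]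
  intro x hx
  rw [inf_principal_eq_bot]
  have hx' : MeromorphicAt f x := hf x (Set.mem_univ x)
  filter_upwards [hx'.eventually_analyticAt] with y hy
  intro hmem
  exact hmem.1 hy

lemma zero_case {f : ℂ → ℂ} (hf : MeromorphicOn f Set.univ)
    (h0 : ∀ᶠ z in 𝓝[≠] (0:ℂ), f z = 0) :
    ∀ z : ℂ, z ≠ 0 → AnalyticAt ℂ f z → f z = 0 := by
  set U := {z : ℂ | AnalyticAt ℂ f z} with hU
  have hUopen : IsOpen U := isOpen_analyticAt ℂ f
  have hUconn : IsPreconnected U := by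
    have hcount : Uᶜ.Countable := by
      have := countable_nonanalytic hf
      have he : Uᶜ = {z : ℂ | ¬ AnalyticAt ℂ f z} := by
        ext z
        simp [hU]
      rwa [he]
    have hpath := hcount.isPathConnected_compl_of_one_lt_rank
      (by rw [Complex.rank_real_complex]; norm_num)
    rw [compl_compl] at hpath
    exact hpath.isConnected.isPreconnected
  rw [eventually_nhdsWithin_iff] at h0
  obtain ⟨t, htp, hto, ht0⟩ := eventually_nhds_iff.mp h0
  obtain ⟨ε, hε, hball⟩ := Metric.isOpen_iff.mp hto 0 ht0
  set z₀ : ℂ := ((ε/2 : ℝ) : ℂ) with hz₀def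
  have hz₀t : z₀ ∈ t := by
    apply hball
    rw [Metric.mem_ball, dist_zero_right, hz₀def]
    rw [Complex.norm_real]
    rw [Real.norm_of_nonneg (by linarith)]
    linarith
  have hz₀ne : z₀ ≠ 0 := by
    rw [hz₀def]
    exact_mod_cast (by positivity : (ε/2 : ℝ) ≠ 0)
  have hz₀eq : f =ᶠ[𝓝 z₀] 0 := by
    apply eventually_of_mem ((hto.sdiff isClosed_singleton).mem_nhds ⟨hz₀t, by simpa using hz₀ne⟩)
    intro w hw
    exact htp w hw.1 (by simpa using hw.2)
  have hz₀U : z₀ ∈ U := analyticAt_const.congr hz₀eq.symm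
  have heq := AnalyticOnNhd.eqOn_zero_of_preconnected_of_eventuallyEq_zero
    (fun z hz => hz) hUconn hz₀U hz₀eq
  intro z hz hzan
  exact heq hzan

lemma key {c : ℂ} {f g : ℂ → ℂ} {n : ℤ} (hg : AnalyticAt ℂ g 0) (hg0 : g 0 ≠ 0)
    (heq : ∀ᶠ z in 𝓝[≠] (0:ℂ), f z = z ^ n * g z)
    (hode : ∀ z : ℂ, z ≠ 0 → AnalyticAt ℂ f z →
      iteratedDeriv 2 f z - c / z ^ 2 * f z = 0) :
    c = (n:ℂ) * ((n:ℂ) - 1) := by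
  obtain ⟨r, hr, hgan⟩ := hg.exists_ball_analyticOnNhd
  rw [eventually_nhdsWithin_iff] at heq
  obtain ⟨t, htp, hto, ht0⟩ := eventually_nhds_iff.mp heq
  set V : Set ℂ := (Metric.ball (0:ℂ) r ∩ t) \ {0} with hV
  have hVopen : IsOpen V := (Metric.isOpen_ball.inter hto).sdiff isClosed_singleton
  have hfeq : ∀ w ∈ V, f w = w ^ n * g w := fun w hw => htp w hw.1.2 (by simpa using hw.2)
  have hgd : ∀ w ∈ Metric.ball (0:ℂ) r, DifferentiableAt ℂ g w :=
    fun w hw => (hgan w hw).differentiableAt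
  set h1 : ℂ → ℂ := fun w => (n:ℂ) * w^(n-1) * g w + w^n * deriv g w with hh1
  have hder1 : ∀ w ∈ V, HasDerivAt (fun w : ℂ => w ^ n * g w) (h1 w) w := by
    intro w hw
    have hw0 : w ≠ 0 := by simpa using hw.2
    exact (hasDerivAt_zpow n w (Or.inl hw0)).mul ((hgd w hw.1.1).hasDerivAt)
  set Φ : ℂ → ℂ := fun z => ((n:ℂ)*((n:ℂ)-1) - c) * g z + 2*(n:ℂ)*z*(deriv g z)
      + z*z*(deriv (deriv g) z) with hΦ
  have hΦ0 : ∀ z ∈ V, Φ z = 0 := by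
    intro z hz
    have hz0 : z ≠ 0 := by simpa using hz.2
    have hanal_h : AnalyticAt ℂ (fun w : ℂ => w ^ n * g w) z := by
      apply DifferentiableOn.analyticAt (s := V) _ (hVopen.mem_nhds hz)
      intro w hw
      exact ((hder1 w hw).differentiableAt).differentiableWithinAt
    have hfg : f =ᶠ[𝓝 z] (fun w : ℂ => w ^ n * g w) :=
      eventually_of_mem (hVopen.mem_nhds hz) hfeq
    have hanf : AnalyticAt ℂ f z := hanal_h.congr hfg.symm
    have hodez := hode z hz0 hanf
    have hT1 : HasDerivAt (fun w : ℂ => (n:ℂ) * w^(n-1) * g w)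
        ((n:ℂ)*((n:ℂ)-1)*z^(n-1-1)*g z + (n:ℂ)*z^(n-1)*(deriv g z)) z := by
      have h := ((hasDerivAt_zpow (n-1) z (Or.inl hz0)).const_mul (n:ℂ)).mul
        ((hgd z hz.1.1).hasDerivAt)
      refine h.congr_deriv ?_
      push_cast
      ring
    have hT2 : HasDerivAt (fun w : ℂ => w^n * deriv g w)
        ((n:ℂ)*z^(n-1)*(deriv g z) + z^n*(deriv (deriv g) z)) z := by
      exact (hasDerivAt_zpow n z (Or.inl hz0)).mul
        ((hgan.deriv z hz.1.1).differentiableAt.hasDerivAt)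
    have hder2 : HasDerivAt h1
        ((n:ℂ)*((n:ℂ)-1)*z^(n-1-1)*g z + 2*(n:ℂ)*z^(n-1)*(deriv g z)
          + z^n*(deriv (deriv g) z)) z := by
      have h := hT1.add hT2
      refine h.congr_deriv ?_
      ring
    have hdf : deriv f =ᶠ[𝓝 z] h1 := by
      apply eventually_of_mem (hVopen.mem_nhds hz)
      intro w hw
      have hfw : f =ᶠ[𝓝 w] (fun w : ℂ => w ^ n * g w) :=
        eventually_of_mem (hVopen.mem_nhds hw) hfeq
      rw [hfw.deriv_eq, (hder1 w hw).deriv]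
    have hd2 : iteratedDeriv 2 f z = (n:ℂ)*((n:ℂ)-1)*z^(n-1-1)*g z
        + 2*(n:ℂ)*z^(n-1)*(deriv g z) + z^n*(deriv (deriv g) z) := by
      rw [show (2:ℕ) = 1 + 1 from rfl, iteratedDeriv_succ, iteratedDeriv_one]
      rw [hdf.deriv_eq, hder2.deriv]
    set u : ℂ := z^(n-1-1) with hu
    have e1 : z^n = u * z * z := by
      rw [hu, show n = n-1-1+1+1 by ring, zpow_add₀ hz0, zpow_add₀ hz0, zpow_one,
        show n-1-1+1+1-1-1 = n-1-1 by ring]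
    have e2 : z^(n-1) = u * z := by
      rw [hu, show n-1 = n-1-1+1 by ring, zpow_add₀ hz0, zpow_one,
        show n-1-1+1-1 = n-1-1 by ring]
    have hu0 : u ≠ 0 := by
      rw [hu]
      exact zpow_ne_zero _ hz0
    have hfz : f z = (u * z * z) * g z := by
      rw [hfeq z hz, e1]
    have hfrac : c / z^2 * ((u * z * z) * g z) = c * (u * g z) := by
      field_simp
    rw [hd2, hfz, hfrac, e1, e2] at hodez
    have huΦ : u * Φ z = 0 := by
      rw [hΦ]
      linear_combination hodez
    rcases mul_eq_zero.mp huΦ with h | h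
    · exact absurd h hu0
    · exact h
  have hΦev : ∀ᶠ z in 𝓝[≠] (0:ℂ), Φ z = 0 := by
    rw [eventually_nhdsWithin_iff]
    filter_upwards [Metric.ball_mem_nhds (0:ℂ) hr, hto.mem_nhds ht0] with z h1z h2z hz0
    exact hΦ0 z ⟨⟨h1z, h2z⟩, by simpa using hz0⟩
  have hcont : ContinuousAt Φ 0 := by
    have hg1 := (hgan 0 (Metric.mem_ball_self hr)).continuousAt
    have hg2 := ((hgan.deriv) 0 (Metric.mem_ball_self hr)).continuousAt
    have hg3 := (((hgan.deriv).deriv) 0 (Metric.mem_ball_self hr)).continuousAt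
    exact ((continuousAt_const.mul hg1).add
      (((continuousAt_const.mul continuousAt_id).mul hg2))).add
      (((continuousAt_id.mul continuousAt_id)).mul hg3)
  have hlim : Tendsto Φ (𝓝[≠] (0:ℂ)) (𝓝 (Φ 0)) :=
    hcont.tendsto.mono_left nhdsWithin_le_nhds
  have hΦ0' : Φ 0 = 0 := tendsto_nhds_unique ((tendsto_congr' hΦev).mp hlim) tendsto_const_nhds
  rw [hΦ] at hΦ0'
  simp only [mul_zero, zero_mul, add_zero] at hΦ0'
  rcases mul_eq_zero.mp hΦ0' with h | h
  · linear_combination -h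
  · exact absurd h hg0


end InvSq

/-- **Criterion for the inverse-square potential.** For `c ∈ ℂ`, the equation
`ψ'' − c z⁻² ψ = E ψ` on `ℂ∖{0}` has, for every `E ∈ ℂ`, a fundamental system
of solutions each meromorphic on all of `ℂ`, if and only if `c = s(s+1)` for
some nonnegative integer `s`. -/
theorem inverse_square_meromorphic_criterion (c : ℂ) :
    (∀ E : ℂ, ∃ y₁ y₂ : ℂ → ℂ,
      MeromorphicOn y₁ Set.univ ∧ MeromorphicOn y₂ Set.univ ∧
      (∀ z : ℂ, z ≠ 0 → AnalyticAt ℂ y₁ z →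
        iteratedDeriv 2 y₁ z - c / z ^ 2 * y₁ z = E * y₁ z) ∧
      (∀ z : ℂ, z ≠ 0 → AnalyticAt ℂ y₂ z →
        iteratedDeriv 2 y₂ z - c / z ^ 2 * y₂ z = E * y₂ z) ∧
      (∀ a b : ℂ,
        (∀ z : ℂ, z ≠ 0 → AnalyticAt ℂ y₁ z → AnalyticAt ℂ y₂ z →
          a * y₁ z + b * y₂ z = 0) →
        a = 0 ∧ b = 0))
    ↔
    ∃ s : ℕ, c = (s : ℂ) * ((s : ℂ) + 1) := by
  constructor
  · intro H
    obtain ⟨y₁, y₂, hm1, hm2, ho1, ho2, hind⟩ := H 0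
    have hode1 : ∀ z : ℂ, z ≠ 0 → AnalyticAt ℂ y₁ z →
        iteratedDeriv 2 y₁ z - c / z^2 * y₁ z = 0 := by
      intro z hz ha
      have := ho1 z hz ha
      rwa [zero_mul] at this
    rcases eq_or_ne (meromorphicOrderAt y₁ 0) ⊤ with h1 | h1
    · have hz1 := InvSq.zero_case hm1 ((meromorphicOrderAt_eq_top_iff).mp h1)
      have := hind 1 0 (fun z hz ha1 _ => by rw [hz1 z hz ha1]; ring)
      exact absurd this.1 one_ne_zero
    · obtain ⟨n, hn⟩ := WithTop.ne_top_iff_exists.mp h1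
      obtain ⟨g, hga, hg0, hgeq⟩ := (meromorphicOrderAt_eq_int_iff (n := n) (hm1 0 (Set.mem_univ 0))).mp hn.symm
      have hgeq' : ∀ᶠ z in 𝓝[≠] (0:ℂ), y₁ z = z ^ n * g z := by
        filter_upwards [hgeq] with z hz
        simpa using hz
      have hcn := InvSq.key hga hg0 hgeq' hode1
      rcases le_or_gt 1 n with hn1 | hn1
      · refine ⟨(n-1).toNat, ?_⟩
        have hcast : (((n-1).toNat : ℕ) : ℂ) = (n:ℂ) - 1 := by
          have h2 : (((n-1).toNat : ℕ) : ℤ) = n - 1 := Int.toNat_of_nonneg (by omega)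
          exact_mod_cast h2
        rw [hcn, hcast]
        ring
      · refine ⟨(-n).toNat, ?_⟩
        have hcast : (((-n).toNat : ℕ) : ℂ) = -(n:ℂ) := by
          have h2 : (((-n).toNat : ℕ) : ℤ) = -n := Int.toNat_of_nonneg (by omega)
          exact_mod_cast h2
        rw [hcn, hcast]
        ring
  · rintro ⟨s, hs⟩ E
    exact InvSq.reverse c s hs E
end
end
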